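/- arXiv:0906.4290 — 8 statements merged into one kernel-verified Lean document; each statement's English description precedes it below -/
import Mathlib

section
/- The partial sums of central binomial coefficients satisfy ∑_{k=0}^{n} C(2k,k) ~ 4^{n+1}/(3·√(π·n)) as n → ∞, i.e., the ratio of the two sides tends to 1 as n tends to infinity. -/
/-!
Consecutive central binomial coefficients have ratio `2 (2k + 1) / (k + 1) → 4`. For a positive
sequence with `a (k + 1) / a k → r > 1`, the differences satisfy `a (k + 1) - a k ~ (r - 1) a k`;
summing (the partial sums diverge) and telescoping gives `∑_{k ≤ n} a k ~ r / (r - 1) · a n`,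
so the sum is `~ 4/3 · C(2n, n)`. Wallis' product `W n = 16ⁿ / (C(2n, n)² (2n + 1)) → π / 2`
gives `C(2n, n) ~ 4ⁿ / √(π n)`.
-/

open Finset Filter Real
open Asymptotics Topology Nat

theorem Asymptotics.IsEquivalent.sum_range {f g : ℕ → ℝ} (h : f ~[atTop] g) (hg : 0 ≤ g)
    (hg_sum : Tendsto (fun n => ∑ i ∈ range n, g i) atTop atTop) :
    (fun n => ∑ i ∈ range n, f i) ~[atTop] fun n => ∑ i ∈ range n, g i := by
  have := h.isLittleO.sum_range hg hg_sum
  simp only [Pi.sub_apply, sum_sub_distrib] at this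
  exact this

theorem isEquivalent_sum_range_succ_of_tendsto_ratio {a : ℕ → ℝ} {r : ℝ} (ha : ∀ n, 0 < a n)
    (hr : 1 < r) (h : Tendsto (fun n => a (n + 1) / a n) atTop (𝓝 r)) :
    (fun n => ∑ k ∈ range (n + 1), a k) ~[atTop] fun n => r / (r - 1) * a n := by
  have hr₀ : 0 < r - 1 := sub_pos.mpr hr
  have hdiv : Tendsto (fun n => (r - 1) * ∑ k ∈ range n, a k) atTop atTop := by
    refine Tendsto.const_mul_atTop hr₀ <| (not_summable_iff_tendsto_nat_atTop_of_nonneg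
      fun n => (ha n).le).mp (not_summable_of_ratio_test_tendsto_gt_one hr ?_)
    simpa only [Real.norm_of_nonneg (ha _).le] using h
  have hstep : (fun k => a (k + 1) - a k) ~[atTop] fun k => (r - 1) * a k := by
    refine isEquivalent_of_tendsto_one ?_
    have := (h.sub_const 1).div_const (r - 1)
    rw [div_self hr₀.ne'] at this
    refine this.congr fun k => ?_
    simp only [Pi.div_apply]
    field_simp [(ha k).ne']
  have htelescope : a ~[atTop] fun n => (r - 1) * ∑ k ∈ range n, a k := by
    have := hstep.sum_range (fun k => mul_nonneg hr₀.le (ha k).le)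
      (by simpa only [mul_sum] using hdiv)
    simp only [sum_range_sub, ← mul_sum] at this
    simpa using
      this.add_const_of_norm_tendsto_atTop (c := a 0) (tendsto_norm_atTop_atTop.comp hdiv)
  have hsucc : (fun n => a (n + 1)) ~[atTop] fun n => r * a n := by
    refine isEquivalent_of_tendsto_one ?_
    have := h.div_const r
    rw [div_self (zero_lt_one.trans hr).ne'] at this
    refine this.congr fun n => ?_
    simp only [Pi.div_apply]
    field_simp [(ha n).ne']
  calc (fun n => ∑ k ∈ range (n + 1), a k)
      = fun n => (r - 1)⁻¹ * ((r - 1) * ∑ k ∈ range (n + 1), a k) := by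
        ext n; field_simp
    _ ~[atTop] fun n => (r - 1)⁻¹ * a (n + 1) :=
        IsEquivalent.refl.mul (htelescope.comp_tendsto (tendsto_add_atTop_nat 1)).symm
    _ ~[atTop] fun n => (r - 1)⁻¹ * (r * a n) := IsEquivalent.refl.mul hsucc
    _ = fun n => r / (r - 1) * a n := by ext n; ring

theorem Real.Wallis.W_eq_sixteen_pow_div_centralBinom_sq (n : ℕ) :
    Wallis.W n = 16 ^ n / ((centralBinom n : ℝ) ^ 2 * (2 * n + 1)) := by
  have hfac : (2 * n)! = centralBinom n * n ! * n ! := by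
    rw [centralBinom, ← Nat.choose_mul_factorial_mul_factorial (by omega : n ≤ 2 * n)]
    congr 2; omega
  rw [Wallis.W_eq_factorial_ratio, hfac, pow_mul]
  push_cast
  field_simp
  norm_num

theorem tendsto_centralBinom_sq_mul_div_sixteen_pow :
    Tendsto (fun n => (centralBinom n : ℝ) ^ 2 * (π * n) / 16 ^ n) atTop (𝓝 1) := by
  have := (Stirling.tendsto_self_div_two_mul_self_add_one.const_mul π).div
    Wallis.tendsto_W_nhds_pi_div_two (by positivity)
  rw [show π * (1 / 2) / (π / 2) = 1 by field_simp] at this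
  refine this.congr fun n => ?_
  rw [Pi.div_apply, Wallis.W_eq_sixteen_pow_div_centralBinom_sq]
  have := centralBinom_pos n
  field_simp

theorem isEquivalent_centralBinom :
    (fun n => (centralBinom n : ℝ)) ~[atTop] fun n => 4 ^ n / √(π * n) := by
  refine isEquivalent_of_tendsto_one ?_
  have := tendsto_centralBinom_sq_mul_div_sixteen_pow.sqrt
  rw [Real.sqrt_one] at this
  refine this.congr fun n => ?_
  have h16 : (16 : ℝ) ^ n = (4 ^ n) ^ 2 := by rw [← pow_mul, mul_comm, pow_mul]; norm_num
  rw [Pi.div_apply, div_div_eq_mul_div, Real.sqrt_div' _ (by positivity),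
    Real.sqrt_mul' _ (by positivity), Real.sqrt_sq (by positivity), h16,
    Real.sqrt_sq (by positivity)]

theorem tendsto_centralBinom_succ_div_centralBinom :
    Tendsto (fun n => (centralBinom (n + 1) : ℝ) / centralBinom n) atTop (𝓝 4) := by
  have := (tendsto_one_div_add_atTop_nhds_zero_nat.const_mul (2 : ℝ)).const_sub (4 : ℝ)
  rw [mul_zero, sub_zero] at this
  refine this.congr fun n => ?_
  have h := congrArg (Nat.cast : ℕ → ℝ) (succ_mul_centralBinom_succ n)
  push_cast at h
  have := centralBinom_pos n
  rw [eq_div_iff (by positivity)]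
  field_simp
  linarith

theorem central_binomial_partial_sum_equivalent :
    Filter.Tendsto
      (fun n : ℕ =>
        (∑ k ∈ Finset.range (n + 1), ((2 * k).choose k : ℝ)) /
          (4 ^ (n + 1) / (3 * Real.sqrt (Real.pi * n))))
      Filter.atTop (nhds 1) := by
  have hsum := isEquivalent_sum_range_succ_of_tendsto_ratio
    (fun n => Nat.cast_pos.mpr (centralBinom_pos n)) (by norm_num)
    tendsto_centralBinom_succ_div_centralBinom
  have hequiv : (fun n => ∑ k ∈ range (n + 1), (centralBinom k : ℝ)) ~[atTop]
      fun n => 4 ^ (n + 1) / (3 * √(π * n)) := by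
    refine hsum.trans ((IsEquivalent.refl.mul isEquivalent_centralBinom).congr_right ?_)
    filter_upwards with n
    simp only [Pi.mul_apply]
    ring
  refine (isEquivalent_iff_tendsto_one ?_).mp hequiv
  filter_upwards [eventually_ne_atTop 0] with n hn
  have : 0 < π * n := mul_pos pi_pos (Nat.cast_pos.mpr (Nat.pos_of_ne_zero hn))
  positivity
end

section
/- For every natural number m, as n → ∞ one has ∑_{k=0}^{n} C(2k,k) = (4/3)·C(2n,n)·∑_{j=0}^{m} 3^{-j} / ∏_{i=1}^{j} (2n/(2i−1) − 1) + O(4^n · n^{-m-3/2}), where the j = 0 summand is interpreted as 1 (empty product); equivalently, the function n ↦ ∑_{k=0}^{n} C(2k,k) − (4/3)·C(2n,n)·∑_{j=0}^{m} 3^{-j}/∏_{i=1}^{j}(2n/(2i−1) − 1) is big-O of n ↦ 4^n · n^{-(m+3/2)} as n → ∞. -/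
/-!
Write `v j n = C(2n,n) ∏_{i ≤ j} (2i-1)/(2n-2i+1)`, so that the `j`-th summand of the expansion is
`(4/3) 3^{-j} v j n`. The identity `4 v j n - v j (n+1) = v (j+1) (n+1)` makes the expansion
telescope: the error `E m n` grows by exactly `3^{-(m+1)} v (m+1) (n+1)` from `n` to `n+1`, so it
is a constant plus `3^{-(m+1)} ∑_{k ≤ n} v (m+1) k`. Since `v (m+1)` at least doubles from one index
to the next once `k ≥ 2m+2`, this sum is `O(v (m+1) n)`, and `v (m+1) n = O(C(2n,n) n^{-m-1})`,
which is `O(4^n n^{-m-3/2})` because `C(2n,n)^2 (2n+1) ≤ 16^n`.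
-/

open Finset Filter Asymptotics Real

section Doubling

variable {a : ℕ → ℝ} {N : ℕ}

theorem le_of_doubling (hN : 0 ≤ a N) (h : ∀ k, N ≤ k → 2 * a k ≤ a (k + 1)) {n : ℕ}
    (hn : N ≤ n) : a N ≤ a n := by
  induction n, hn using Nat.le_induction with
  | base => rfl
  | succ n hn ih => linarith [h n hn]

theorem sum_Ico_le_of_doubling (h : ∀ k, N ≤ k → 2 * a k ≤ a (k + 1)) {n : ℕ} (hn : N ≤ n) :
    ∑ k ∈ Ico N (n + 1), a k ≤ 2 * a n - a N := by
  induction n, hn using Nat.le_induction with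
  | base => simp only [Nat.Ico_succ_singleton, sum_singleton]; linarith
  | succ n hn ih =>
    rw [sum_Ico_succ_top (by omega)]
    linarith [h n hn]

theorem isBigO_const_of_doubling (hN : 0 < a N) (h : ∀ k, N ≤ k → 2 * a k ≤ a (k + 1))
    (c : ℝ) : (fun _ ↦ c) =O[atTop] a :=
  IsBigO.of_bound (‖c‖ / a N) <| by
    filter_upwards [eventually_ge_atTop N] with n hn
    have := le_of_doubling hN.le h hn
    rw [norm_of_nonneg (hN.le.trans this), div_mul_eq_mul_div, le_div_iff₀ hN]
    exact mul_le_mul_of_nonneg_left this (norm_nonneg c)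

theorem isBigO_sum_range_of_doubling (hN : 0 < a N) (h : ∀ k, N ≤ k → 2 * a k ≤ a (k + 1)) :
    (fun n ↦ ∑ k ∈ range (n + 1), a k) =O[atTop] a := by
  have htail : (fun n ↦ ∑ k ∈ Ico N (n + 1), a k) =O[atTop] a := by
    refine IsBigO.of_bound 2 ?_
    filter_upwards [eventually_ge_atTop N] with n hn
    have hpos : ∀ k ∈ Ico N (n + 1), 0 ≤ a k := fun k hk ↦
      hN.le.trans (le_of_doubling hN.le h (mem_Ico.mp hk).1)
    rw [norm_of_nonneg (sum_nonneg hpos), norm_of_nonneg (hpos n (by simp [hn]))]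
    linarith [sum_Ico_le_of_doubling h hn]
  refine ((isBigO_const_of_doubling hN h (∑ k ∈ range N, a k)).add htail).congr' ?_ .rfl
  filter_upwards [eventually_ge_atTop N] with n hn
  exact sum_range_add_sum_Ico a (by omega)

end Doubling

theorem Nat.centralBinom_sq_mul_le (n : ℕ) : n.centralBinom ^ 2 * (2 * n + 1) ≤ 16 ^ n := by
  induction n with
  | zero => simp
  | succ n ih =>
    have hrec := Nat.succ_mul_centralBinom_succ n
    have hodd : (2 * n + 1) * (2 * n + 3) ≤ (n + 1) ^ 2 * 4 := by nlinarith
    refine Nat.le_of_mul_le_mul_left (c := (n + 1) ^ 2) ?_ (by positivity)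
    calc (n + 1) ^ 2 * ((n + 1).centralBinom ^ 2 * (2 * (n + 1) + 1))
        = ((n + 1) * (n + 1).centralBinom) ^ 2 * (2 * n + 3) := by ring
      _ = 4 * (2 * n + 1) * (n.centralBinom ^ 2 * ((2 * n + 1) * (2 * n + 3))) := by
          rw [hrec]; ring
      _ ≤ 4 * (2 * n + 1) * (n.centralBinom ^ 2 * ((n + 1) ^ 2 * 4)) := by gcongr
      _ = 16 * (n + 1) ^ 2 * (n.centralBinom ^ 2 * (2 * n + 1)) := by ring
      _ ≤ 16 * (n + 1) ^ 2 * 16 ^ n := by gcongr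
      _ = (n + 1) ^ 2 * 16 ^ (n + 1) := by ring

theorem Nat.centralBinom_mul_sqrt_le (n : ℕ) : (n.centralBinom : ℝ) * √n ≤ 4 ^ n := by
  have h : ((n.centralBinom ^ 2 * (2 * n + 1) : ℕ) : ℝ) ≤ ((16 ^ n : ℕ) : ℝ) :=
    Nat.cast_le.mpr (centralBinom_sq_mul_le n)
  push_cast at h
  rw [← pow_le_pow_iff_left₀ (by positivity) (by positivity) two_ne_zero, mul_pow,
    Real.sq_sqrt n.cast_nonneg, ← pow_mul, mul_comm n, pow_mul]
  norm_num
  nlinarith [sq_nonneg (n.centralBinom : ℝ)]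

theorem two_mul_sub_two_mul_add_one_ne_zero (a b : ℕ) : (2 * a - 2 * b + 1 : ℝ) ≠ 0 := by
  have h : (2 * a - 2 * b + 1 : ℤ) ≠ 0 := by omega
  exact_mod_cast h

noncomputable def expansionFactor (j n : ℕ) : ℝ :=
  ∏ i ∈ Icc 1 j, (2 * i - 1 : ℝ) / (2 * n - 2 * i + 1)

theorem expansionFactor_zero_left (n : ℕ) : expansionFactor 0 n = 1 := by
  simp [expansionFactor]

theorem expansionFactor_succ_left (j n : ℕ) :
    expansionFactor (j + 1) n = expansionFactor j n * ((2 * j + 1) / (2 * n - 2 * j - 1)) := by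
  rw [expansionFactor, prod_Icc_succ_top (by omega), expansionFactor]
  congr 1
  push_cast
  ring

theorem expansionFactor_succ_right (j n : ℕ) :
    (2 * n + 1) * expansionFactor j (n + 1) = (2 * n - 2 * j + 1) * expansionFactor j n := by
  induction j with
  | zero => simp [expansionFactor_zero_left]
  | succ j ih =>
    have h₁ := two_mul_sub_two_mul_add_one_ne_zero n j
    have h₂ := two_mul_sub_two_mul_add_one_ne_zero n (j + 1)
    rw [expansionFactor_succ_left, expansionFactor_succ_left]
    push_cast at h₂ ⊢
    grind

theorem expansionFactor_pos {j n : ℕ} (h : j ≤ n) : 0 < expansionFactor j n := by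
  refine prod_pos fun i hi ↦ ?_
  have hi' : (1 : ℝ) ≤ i ∧ (i : ℝ) ≤ n := by
    obtain ⟨h₁, h₂⟩ := mem_Icc.mp hi
    exact ⟨by exact_mod_cast h₁, by exact_mod_cast h₂.trans h⟩
  apply div_pos <;> linarith

theorem expansionFactor_le {j n : ℕ} (h : 2 * j ≤ n + 1) :
    expansionFactor j n ≤ (2 * j / n : ℝ) ^ j := by
  calc expansionFactor j n ≤ ∏ _i ∈ Icc 1 j, (2 * j / n : ℝ) := by
        refine prod_le_prod (fun i hi ↦ ?_) (fun i hi ↦ ?_)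
        all_goals
          obtain ⟨h₁, h₂⟩ := mem_Icc.mp hi
          have h₁' : (1 : ℝ) ≤ i := by exact_mod_cast h₁
          have h₂' : (i : ℝ) ≤ j := by exact_mod_cast h₂
          have h₃' : (2 * i : ℝ) ≤ n + 1 := by exact_mod_cast (by omega : 2 * i ≤ n + 1)
        · apply div_nonneg <;> linarith
        · exact div_le_div₀ (by positivity) (by linarith) (by linarith) (by linarith)
    _ = (2 * j / n : ℝ) ^ j := by rw [prod_const, Nat.card_Icc, Nat.add_sub_cancel]

theorem inv_prod_eq_expansionFactor (j n : ℕ) :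
    (∏ i ∈ Icc 1 j, (2 * (n : ℝ) / (2 * i - 1) - 1))⁻¹ = expansionFactor j n := by
  rw [expansionFactor, ← prod_inv_distrib]
  refine prod_congr rfl fun i hi ↦ ?_
  have : (2 * i - 1 : ℝ) ≠ 0 := by
    have : (1 : ℝ) ≤ i := by exact_mod_cast (mem_Icc.mp hi).1
    linarith
  field_simp
  ring

noncomputable def expansionTerm (j n : ℕ) : ℝ := n.centralBinom * expansionFactor j n

theorem expansionTerm_pos {j n : ℕ} (h : j ≤ n) : 0 < expansionTerm j n :=
  mul_pos (mod_cast n.centralBinom_pos) (expansionFactor_pos h)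

theorem expansionTerm_succ_right (j n : ℕ) :
    (n + 1) * expansionTerm j (n + 1) = (4 * n - 4 * j + 2) * expansionTerm j n := by
  have hcb : ((n + 1 : ℕ) : ℝ) * (n + 1).centralBinom = 2 * (2 * n + 1) * n.centralBinom := by
    exact_mod_cast n.succ_mul_centralBinom_succ
  have hf := expansionFactor_succ_right j n
  push_cast at hcb
  have h : (2 * n + 1 : ℝ) ≠ 0 := by positivity
  apply mul_right_cancel₀ h
  calc (n + 1) * expansionTerm j (n + 1) * (2 * n + 1)
      = ((n + 1) * (n + 1).centralBinom) * ((2 * n + 1) * expansionFactor j (n + 1)) := by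
        rw [expansionTerm]; ring
    _ = _ := by rw [hcb, hf, expansionTerm]; ring

theorem four_mul_expansionTerm_sub (j n : ℕ) :
    4 * expansionTerm j n - expansionTerm j (n + 1) = expansionTerm (j + 1) (n + 1) := by
  have hs := expansionTerm_succ_right j n
  have h := two_mul_sub_two_mul_add_one_ne_zero n j
  simp only [expansionTerm, expansionFactor_succ_left] at *
  push_cast at *
  grind

theorem two_mul_expansionTerm_le {j n : ℕ} (h : 2 * j ≤ n) :
    2 * expansionTerm j n ≤ expansionTerm j (n + 1) := by
  have hs := expansionTerm_succ_right j n
  have hpos := expansionTerm_pos (show j ≤ n by omega)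
  have h' : (2 * j : ℝ) ≤ n := by exact_mod_cast h
  nlinarith

theorem rpow_neg_natCast_sub_half {x : ℝ} (hx : 0 < x) (j : ℕ) :
    x ^ (-(j : ℝ) - 1 / 2) = (x ^ j * √x)⁻¹ := by
  rw [show -(j : ℝ) - 1 / 2 = -(j + 1 / 2) by ring, rpow_neg hx.le, rpow_add hx, rpow_natCast,
    sqrt_eq_rpow]

theorem expansionTerm_isBigO (j : ℕ) :
    (fun n ↦ expansionTerm j n) =O[atTop] fun n ↦ (4 : ℝ) ^ n * (n : ℝ) ^ (-(j : ℝ) - 1 / 2) := by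
  refine IsBigO.of_bound ((2 * j) ^ j) ?_
  filter_upwards [eventually_ge_atTop (2 * j + 1)] with n hn
  have hn₀ : (0 : ℝ) < n := by exact_mod_cast (show 0 < n by omega)
  rw [norm_of_nonneg (expansionTerm_pos (by omega)).le, norm_of_nonneg (by positivity),
    rpow_neg_natCast_sub_half hn₀]
  calc expansionTerm j n ≤ n.centralBinom * (2 * j / n : ℝ) ^ j :=
        mul_le_mul_of_nonneg_left (expansionFactor_le (by omega)) (by positivity)
    _ = (2 * j) ^ j * (n.centralBinom * √n * (n ^ j * √n)⁻¹) := by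
        rw [div_pow]
        field_simp
    _ ≤ (2 * j) ^ j * (4 ^ n * (n ^ j * √n)⁻¹) := by
        gcongr
        exact n.centralBinom_mul_sqrt_le

noncomputable def expansionError (m n : ℕ) : ℝ :=
  ∑ k ∈ range (n + 1), (k.centralBinom : ℝ) -
    4 / 3 * ∑ j ∈ range (m + 1), (3 : ℝ)⁻¹ ^ j * expansionTerm j n

theorem expansionError_succ_sub (m n : ℕ) :
    expansionError m (n + 1) - expansionError m n =
      3⁻¹ ^ (m + 1) * expansionTerm (m + 1) (n + 1) := by
  set f : ℕ → ℝ := fun j ↦ 3⁻¹ ^ j * expansionTerm j (n + 1)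
  have hstep (j : ℕ) :
      4 / 3 * (3⁻¹ ^ j * expansionTerm j (n + 1) - 3⁻¹ ^ j * expansionTerm j n) =
        f j - f (j + 1) := by
    linear_combination (-(3 : ℝ)⁻¹ ^ j / 3) * four_mul_expansionTerm_sub j n
  have hf₀ : f 0 = (n + 1).centralBinom := by
    simp [f, expansionTerm, expansionFactor_zero_left]
  have htel : 4 / 3 * (∑ j ∈ range (m + 1), 3⁻¹ ^ j * expansionTerm j (n + 1) -
      ∑ j ∈ range (m + 1), 3⁻¹ ^ j * expansionTerm j n) = f 0 - f (m + 1) := by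
    rw [← sum_range_sub', ← sum_sub_distrib, mul_sum]
    exact sum_congr rfl fun j _ ↦ hstep j
  rw [expansionError, expansionError, sum_range_succ _ (n + 1), ← hf₀]
  linear_combination -htel

theorem expansionError_eq_add_sum_range (m n : ℕ) :
    expansionError m n = expansionError m 0 - 3⁻¹ ^ (m + 1) * expansionTerm (m + 1) 0 +
      3⁻¹ ^ (m + 1) * ∑ k ∈ range (n + 1), expansionTerm (m + 1) k := by
  induction n with
  | zero => simp
  | succ n ih =>
    rw [sum_range_succ]
    linear_combination ih + expansionError_succ_sub m n

theorem sub_expansion_eq_expansionError (m n : ℕ) :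
    (∑ k ∈ Finset.range (n + 1), ((2 * k).choose k : ℝ)) -
         (4 / 3) * ((2 * n).choose n : ℝ) *
           ∑ j ∈ Finset.range (m + 1),
             (3 : ℝ) ^ (-(j : ℤ)) /
               ∏ i ∈ Finset.Icc 1 j, (2 * (n : ℝ) / (2 * i - 1) - 1) =
      expansionError m n := by
  simp only [expansionError, expansionTerm, ← inv_prod_eq_expansionFactor,
    ← Nat.centralBinom_eq_two_mul_choose, mul_sum, zpow_neg, zpow_natCast, inv_pow]
  congr 1
  exact sum_congr rfl fun j _ ↦ by ring

theorem central_binomial_partial_sum_expansion (m : ℕ) :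
    (fun n : ℕ =>
       (∑ k ∈ Finset.range (n + 1), ((2 * k).choose k : ℝ)) -
         (4 / 3) * ((2 * n).choose n : ℝ) *
           ∑ j ∈ Finset.range (m + 1),
             (3 : ℝ) ^ (-(j : ℤ)) /
               ∏ i ∈ Finset.Icc 1 j, (2 * (n : ℝ) / (2 * i - 1) - 1))
      =O[atTop] fun n : ℕ => (4 : ℝ) ^ n * (n : ℝ) ^ (-(m : ℝ) - 3 / 2) := by
  have hpos : 0 < expansionTerm (m + 1) (2 * (m + 1)) := expansionTerm_pos (by omega)
  have hdouble (k : ℕ) (hk : 2 * (m + 1) ≤ k) :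
      2 * expansionTerm (m + 1) k ≤ expansionTerm (m + 1) (k + 1) :=
    two_mul_expansionTerm_le hk
  have hrate : -((m + 1 : ℕ) : ℝ) - 1 / 2 = -(m : ℝ) - 3 / 2 := by push_cast; ring
  simp only [sub_expansion_eq_expansionError]
  rw [funext (expansionError_eq_add_sum_range m)]
  refine ((isBigO_const_of_doubling hpos hdouble _).add
    ((isBigO_sum_range_of_doubling hpos hdouble).const_mul_left _)).trans ?_
  simpa only [hrate] using expansionTerm_isBigO (m + 1)
end

section
/- Let α be a complex number with |α| = 1/4 and α ≠ 1/4. Then as n → ∞, ∑_{k=0}^{n} α^k·C(2k,k) = (1−4α)^{-1/2}·(1 + O(n^{-1/2})); equivalently, the function n ↦ ∑_{k=0}^{n} α^k·C(2k,k) − (1−4α)^{-1/2} is big-O of n ↦ n^{-1/2} as n → ∞, where (1−4α)^{-1/2} denotes the branch of (1−z)^{-1/2} on |z| ≤ 1, z ≠ 1, that equals 1 at z = 0, evaluated at z = 4α. -/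
open Finset Filter Asymptotics Complex

namespace CBW

noncomputable def a (k : ℕ) : ℝ := (Nat.centralBinom k : ℝ) / 4 ^ k

lemma a_nonneg (k : ℕ) : 0 ≤ a k := by unfold a; positivity

lemma a_zero : a 0 = 1 := by simp [a, Nat.centralBinom]

lemma c_succ_le (k : ℕ) : Nat.centralBinom (k+1) ≤ 4 * Nat.centralBinom k := by
  have h := Nat.succ_mul_centralBinom_succ k
  have : (k+1) * Nat.centralBinom (k+1) ≤ (k+1) * (4 * Nat.centralBinom k) := by
    rw [h]; ring_nf; nlinarith [Nat.centralBinom_pos k]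
  exact Nat.le_of_mul_le_mul_left this (Nat.succ_pos k)

lemma a_antitone : Antitone a := by
  apply antitone_nat_of_succ_le
  intro k
  have h := c_succ_le k
  have h4 : (0:ℝ) < 4 ^ k := by positivity
  rw [a, a, pow_succ, div_le_div_iff₀ (by positivity) h4]
  have : (Nat.centralBinom (k+1) : ℝ) ≤ 4 * Nat.centralBinom k := by exact_mod_cast h
  nlinarith [Nat.cast_nonneg (α := ℝ) (Nat.centralBinom k)]

lemma a_le_one (k : ℕ) : a k ≤ 1 := a_zero ▸ a_antitone (Nat.zero_le k)

lemma c_sq_bound (k : ℕ) : Nat.centralBinom k ^ 2 * (2*k+1) ≤ 16 ^ k := by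
  induction k with
  | zero => simp [Nat.centralBinom]
  | succ n ih =>
    have h := Nat.succ_mul_centralBinom_succ n
    have key : ((n+1) * Nat.centralBinom (n+1)) ^ 2 * (2*(n+1)+1)
        = (n+1)^2 * (Nat.centralBinom (n+1) ^ 2 * (2*(n+1)+1)) := by ring
    have h2 : ((n+1) * Nat.centralBinom (n+1)) ^ 2 * (2*(n+1)+1)
        = (2*(2*n+1))^2 * (2*n+3) * Nat.centralBinom n ^ 2 := by rw [h]; ring
    have h3 : (2*(2*n+1))^2 * (2*n+3) * Nat.centralBinom n ^ 2
        ≤ (n+1)^2 * (16 * 16 ^ n) := by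
      calc (2*(2*n+1))^2 * (2*n+3) * Nat.centralBinom n ^ 2
          = (4 * ((2*n+1)*(2*n+3))) * (Nat.centralBinom n ^2 * (2*n+1)) := by ring
        _ ≤ (4 * ((2*n+2)*(2*n+2))) * 16^n := by
            apply Nat.mul_le_mul
            · apply Nat.mul_le_mul_left; nlinarith
            · exact ih
        _ = (n+1)^2 * (16 * 16 ^ n) := by ring
    have h4 : (n+1)^2 * (Nat.centralBinom (n+1) ^ 2 * (2*(n+1)+1)) ≤ (n+1)^2 * (16 * 16^n) := by
      rw [← key, h2]; exact h3
    have := Nat.le_of_mul_le_mul_left h4 (by positivity)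
    calc Nat.centralBinom (n+1) ^ 2 * (2*(n+1)+1) ≤ 16 * 16 ^ n := this
      _ = 16 ^ (n+1) := by rw [pow_succ]; ring

lemma a_sq_bound (k : ℕ) : a k ^ 2 * (2*k+1) ≤ 1 := by
  have h := c_sq_bound k
  have h' : (Nat.centralBinom k : ℝ) ^ 2 * (2*k+1) ≤ 16 ^ k := by exact_mod_cast h
  have h16 : (16:ℝ) ^ k = (4^k)^2 := by rw [← pow_mul, mul_comm k 2, pow_mul]; norm_num
  rw [a, div_pow, div_mul_eq_mul_div, div_le_one (by positivity), ← h16]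
  exact h'

lemma a_le_inv_sqrt {k : ℕ} (hk : 1 ≤ k) : a k ≤ (k:ℝ) ^ (-(1:ℝ)/2) := by
  have hk0 : (0:ℝ) < k := by exact_mod_cast hk
  have h1 : a k ^ 2 ≤ 1 / k := by
    have h := a_sq_bound k
    have h2 : (k:ℝ) ≤ 2*k+1 := by linarith
    rw [le_div_iff₀ hk0]
    nlinarith [sq_nonneg (a k), a_nonneg k]
  have : a k = Real.sqrt (a k ^ 2) := by rw [Real.sqrt_sq (a_nonneg k)]
  rw [this]
  calc Real.sqrt (a k ^2) ≤ Real.sqrt (1/k) := Real.sqrt_le_sqrt h1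
    _ = (k:ℝ) ^ (-(1:ℝ)/2) := by
        rw [one_div, Real.sqrt_inv, Real.sqrt_eq_rpow, ← Real.rpow_neg_one, ← Real.rpow_mul hk0.le]
        norm_num

lemma a_tendsto_zero : Filter.Tendsto a Filter.atTop (nhds 0) := by
  have h : Filter.Tendsto (fun k : ℕ => (k:ℝ) ^ (-(1:ℝ)/2)) Filter.atTop (nhds 0) := by
    have := (tendsto_rpow_neg_atTop (y := (1:ℝ)/2) (by norm_num)).comp tendsto_natCast_atTop_atTop (α := ℕ)
    simpa [neg_div, Function.comp_def] using this
  apply squeeze_zero' (Filter.Eventually.of_forall a_nonneg) ?_ h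
  filter_upwards [Filter.eventually_ge_atTop 1] with k hk
  exact a_le_inv_sqrt hk


local notation "c" => Nat.centralBinom

lemma claimA (k : ℕ) :
    2 * ∑ i ∈ range (k+1), i * (c i * c (k-i)) = k * ∑ i ∈ range (k+1), c i * c (k-i) := by
  have hrefl : ∑ i ∈ range (k+1), i * (c i * c (k-i))
      = ∑ i ∈ range (k+1), (k-i) * (c (k-i) * c i) := by
    rw [← Finset.sum_range_reflect (fun i => i * (c i * c (k-i))) (k+1)]
    apply Finset.sum_congr rfl
    intro i hi
    have hik : i ≤ k := Nat.lt_succ_iff.mp (Finset.mem_range.mp hi)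
    have h1 : k + 1 - 1 - i = k - i := by omega
    have h2 : k - (k - i) = i := by omega
    rw [h1, h2]
  rw [two_mul, mul_sum]
  nth_rewrite 2 [hrefl]
  rw [← Finset.sum_add_distrib]
  apply Finset.sum_congr rfl
  intro i hi
  have hik : i ≤ k := Nat.lt_succ_iff.mp (Finset.mem_range.mp hi)
  have : i + (k - i) = k := by omega
  calc i * (c i * c (k-i)) + (k-i) * (c (k-i) * c i)
      = (i + (k-i)) * (c i * c (k-i)) := by rw [Nat.mul_comm (c (k-i)) (c i), Nat.add_mul]
    _ = k * (c i * c (k-i)) := by rw [this]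

lemma conv (k : ℕ) : ∑ i ∈ range (k+1), c i * c (k-i) = 4 ^ k := by
  induction k with
  | zero => simp [Nat.centralBinom]
  | succ k ih =>
    have hA := claimA (k+1)
    have hstep : ∑ i ∈ range (k+2), i * (c i * c (k+1-i))
        = ∑ i ∈ range (k+1), (i+1) * (c (i+1) * c (k-i)) := by
      rw [Finset.sum_range_succ' (fun i => i * (c i * c (k+1-i))) (k+1)]
      simp [Nat.succ_sub_succ]
    have hterm : ∀ i, (i+1) * (c (i+1) * c (k-i))
        = 2*((2*i) * (c i * c (k-i))) + 2 * (c i * c (k-i)) := by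
      intro i
      have h := Nat.succ_mul_centralBinom_succ i
      calc (i+1) * (c (i+1) * c (k-i)) = ((i+1) * c (i+1)) * c (k-i) := by ring
        _ = (2 * (2*i+1) * c i) * c (k-i) := by rw [h]
        _ = 2*((2*i) * (c i * c (k-i))) + 2 * (c i * c (k-i)) := by ring
    have hsum : ∑ i ∈ range (k+2), i * (c i * c (k+1-i))
        = 2 * (k * ∑ i ∈ range (k+1), c i * c (k-i)) + 2 * ∑ i ∈ range (k+1), c i * c (k-i) := by
      rw [hstep]
      rw [Finset.sum_congr rfl (fun i _ => hterm i)]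
      rw [Finset.sum_add_distrib, ← Finset.mul_sum]
      have h2 : ∑ i ∈ range (k+1), 2*i*(c i * c (k-i))
          = 2 * ∑ i ∈ range (k+1), i * (c i * c (k-i)) := by
        rw [Finset.mul_sum]; apply Finset.sum_congr rfl; intros; ring
      have h3 : ∑ i ∈ range (k+1), 2*(c i * c (k-i))
          = 2 * ∑ i ∈ range (k+1), c i * c (k-i) := by
        rw [Finset.mul_sum]
      rw [h2, h3, claimA k]
    have key : (k+1) * ∑ i ∈ range (k+2), c i * c (k+1-i)
        = (k+1) * (4 * ∑ i ∈ range (k+1), c i * c (k-i)) := by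
      rw [← hA, hsum]; ring
    have := Nat.eq_of_mul_eq_mul_left (Nat.succ_pos k) key
    rw [this, ih, pow_succ]; ring


lemma conv_real (k : ℕ) : ∑ i ∈ range (k+1), a i * a (k-i) = 1 := by
  have h : ((∑ i ∈ range (k+1), Nat.centralBinom i * Nat.centralBinom (k-i) : ℕ) : ℝ) = 4 ^ k := by
    exact_mod_cast congrArg (Nat.cast : ℕ → ℝ) (conv k)
  push_cast at h
  have : ∑ i ∈ range (k+1), a i * a (k-i)
      = (∑ i ∈ range (k+1), (Nat.centralBinom i : ℝ) * Nat.centralBinom (k-i)) / 4 ^ k := by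
    rw [Finset.sum_div]
    apply Finset.sum_congr rfl
    intro i hi
    have hik : i ≤ k := Nat.lt_succ_iff.mp (Finset.mem_range.mp hi)
    rw [a, a, div_mul_div_comm, ← pow_add]
    rw [Nat.add_sub_cancel' hik]
  rw [this, h, div_self (by positivity)]

lemma norm_term_le (k : ℕ) (w : ℂ) : ‖(a k : ℂ) * w ^ k‖ ≤ ‖w‖ ^ k := by
  rw [norm_mul, norm_pow]
  calc ‖(a k : ℂ)‖ * ‖w‖^k = a k * ‖w‖^k := by
        rw [Complex.norm_real, Real.norm_of_nonneg (a_nonneg k)]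
    _ ≤ 1 * ‖w‖^k := by
        apply mul_le_mul_of_nonneg_right (a_le_one k) (by positivity)
    _ = ‖w‖^k := one_mul _

lemma summable_norm_f {w : ℂ} (hw : ‖w‖ < 1) : Summable (fun k => ‖(a k : ℂ) * w ^ k‖) :=
  Summable.of_nonneg_of_le (fun k => norm_nonneg _) (fun k => norm_term_le k w)
    (summable_geometric_of_lt_one (norm_nonneg w) hw)

lemma summable_f {w : ℂ} (hw : ‖w‖ < 1) : Summable (fun k => (a k : ℂ) * w ^ k) :=
  (summable_norm_f hw).of_norm

lemma f_sq {w : ℂ} (hw : ‖w‖ < 1) :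
    (∑' k, (a k : ℂ) * w ^ k) * (∑' k, (a k : ℂ) * w ^ k) = (1 - w)⁻¹ := by
  rw [tsum_mul_tsum_eq_tsum_sum_range_of_summable_norm (summable_norm_f hw) (summable_norm_f hw)]
  have h : ∀ n : ℕ, ∑ k ∈ range (n+1), ((a k : ℂ) * w ^ k) * ((a (n-k) : ℂ) * w ^ (n-k))
      = w ^ n := by
    intro n
    have : ∀ k ∈ range (n+1), ((a k : ℂ) * w ^ k) * ((a (n-k) : ℂ) * w ^ (n-k))
        = ((a k * a (n-k) : ℝ) : ℂ) * w ^ n := by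
      intro k hk
      have hkn : k ≤ n := Nat.lt_succ_iff.mp (Finset.mem_range.mp hk)
      push_cast
      rw [show ((a k : ℂ) * w^k) * ((a (n-k):ℂ) * w^(n-k)) = (a k:ℂ) * (a (n-k):ℂ) * (w^k * w^(n-k)) by ring,
        ← pow_add, Nat.add_sub_cancel' hkn]
    rw [Finset.sum_congr rfl this, ← Finset.sum_mul, ← Complex.ofReal_sum, conv_real]
    simp
  rw [tsum_congr h, tsum_geometric_of_norm_lt_one hw]

lemma one_sub_mem_slit {w : ℂ} (hw : ‖w‖ < 1) : 0 < (1 - w).re := by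
  have : w.re < 1 := lt_of_le_of_lt (Complex.re_le_norm w) hw
  simpa using this

lemma one_sub_ne_zero {w : ℂ} (hw : ‖w‖ < 1) : (1 : ℂ) - w ≠ 0 := by
  intro h
  have : (1:ℂ) = w := by linear_combination h
  rw [← this] at hw; simp at hw

lemma f_eq {w : ℂ} (hw : ‖w‖ < 1) :
    ∑' k, (a k : ℂ) * w ^ k = Complex.exp (-(1/2) * Complex.log (1 - w)) := by
  set g : ℂ → ℂ := fun u => (∑' k, (a k : ℂ) * u ^ k) * Complex.exp ((1/2) * Complex.log (1 - u))
    with hg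
  have hgsq : ∀ u : ℂ, ‖u‖ < 1 → g u = 1 ∨ g u = -1 := by
    intro u hu
    rw [← mul_self_eq_one_iff]
    have : g u * g u = ((∑' k, (a k : ℂ) * u ^ k) * (∑' k, (a k : ℂ) * u ^ k))
        * (Complex.exp ((1/2) * Complex.log (1 - u)) * Complex.exp ((1/2) * Complex.log (1 - u))) := by
      rw [hg]; ring
    rw [this, f_sq hu, ← Complex.exp_add]
    rw [show (1/2 : ℂ) * Complex.log (1-u) + (1/2) * Complex.log (1-u) = Complex.log (1-u) by ring]
    rw [Complex.exp_log (one_sub_ne_zero hu)]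
    exact inv_mul_cancel₀ (one_sub_ne_zero hu)
  -- continuity of t ↦ g (t * w) on [0,1]
  have hcont : ContinuousOn (fun t : ℝ => g ((t:ℂ) * w)) (Set.Icc 0 1) := by
    have hnorm : ∀ t ∈ Set.Icc (0:ℝ) 1, ‖(t:ℂ) * w‖ ≤ ‖w‖ := by
      intro t ht
      rw [norm_mul, Complex.norm_real, Real.norm_of_nonneg ht.1]
      calc t * ‖w‖ ≤ 1 * ‖w‖ := mul_le_mul_of_nonneg_right ht.2 (norm_nonneg w)
        _ = ‖w‖ := one_mul _
    apply ContinuousOn.mul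
    · apply continuousOn_tsum (u := fun k => ‖w‖ ^ k)
      · intro k
        apply Continuous.continuousOn
        continuity
      · exact summable_geometric_of_lt_one (norm_nonneg w) hw
      · intro k t ht
        calc ‖(a k : ℂ) * ((t:ℂ)*w) ^ k‖ ≤ ‖(t:ℂ)*w‖ ^ k := norm_term_le k _
          _ ≤ ‖w‖ ^ k := pow_le_pow_left₀ (norm_nonneg _) (hnorm t ht) k
    · apply continuousOn_of_forall_continuousAt
      intro t ht
      have htw : ‖(t:ℂ) * w‖ < 1 := lt_of_le_of_lt (hnorm t ht) hw
      apply Complex.continuous_exp.continuousAt.comp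
      apply ContinuousAt.mul continuousAt_const
      exact ContinuousAt.clog
        (continuous_const.sub (Complex.continuous_ofReal.mul continuous_const)).continuousAt
        (Or.inl (one_sub_mem_slit htw))
  -- value at 0
  have hf0 : g 0 = 1 := by
    rw [hg]
    simp only [sub_zero, Complex.log_one, mul_zero, Complex.exp_zero, mul_one]
    rw [tsum_eq_single 0 (fun k hk => by simp [zero_pow hk])]
    simp [a_zero]
  have hgw : g w = 1 := by
    rcases hgsq w hw with h | h
    · exact h
    · exfalso
      have hφ : ∀ t ∈ Set.Icc (0:ℝ) 1, (g ((t:ℂ)*w)).re = 1 ∨ (g ((t:ℂ)*w)).re = -1 := by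
        intro t ht
        have hu : ‖(t:ℂ)*w‖ < 1 := by
          calc ‖(t:ℂ)*w‖ = |t| * ‖w‖ := by rw [norm_mul, Complex.norm_real]; rfl
            _ ≤ 1 * ‖w‖ := by
                apply mul_le_mul_of_nonneg_right _ (norm_nonneg w)
                rw [abs_le]; constructor <;> linarith [ht.1, ht.2]
            _ < 1 := by rw [one_mul]; exact hw
        rcases hgsq _ hu with h' | h' <;> [left; right] <;> rw [h'] <;> simp
      have hφcont : ContinuousOn (fun t : ℝ => (g ((t:ℂ)*w)).re) (Set.Icc 0 1) :=
        Complex.continuous_re.comp_continuousOn hcont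
      have := intermediate_value_Icc' (by norm_num : (0:ℝ) ≤ 1) hφcont
      simp only [Complex.ofReal_zero, zero_mul, Complex.ofReal_one, one_mul, hf0, h,
        Complex.one_re, Complex.neg_re] at this
      obtain ⟨t, ht, ht0⟩ := this (by norm_num : (0:ℝ) ∈ Set.Icc (-(1:ℂ)).re (1:ℂ).re)
      simp only [] at ht0
      rcases hφ t ht with h' | h' <;> rw [ht0] at h' <;> norm_num at h'
  -- conclude
  have hthis : (∑' k, (a k : ℂ) * w ^ k) * Complex.exp ((1/2) * Complex.log (1-w)) = 1 := hgw
  have hexp : Complex.exp ((1/2) * Complex.log (1-w))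
      * Complex.exp (-(1/2) * Complex.log (1-w)) = 1 := by
    rw [← Complex.exp_add]
    rw [show (1/2 : ℂ) * Complex.log (1-w) + -(1/2) * Complex.log (1-w) = 0 by ring]
    exact Complex.exp_zero
  calc ∑' k, (a k : ℂ) * w ^ k
      = (∑' k, (a k : ℂ) * w ^ k) * (Complex.exp ((1/2) * Complex.log (1-w))
        * Complex.exp (-(1/2) * Complex.log (1-w))) := by rw [hexp, mul_one]
    _ = Complex.exp (-(1/2) * Complex.log (1-w)) := by
        rw [← mul_assoc, hthis, one_mul]


noncomputable def G (z : ℂ) (n : ℕ) : ℂ := ∑ k ∈ range n, z ^ k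
noncomputable def d (i : ℕ) : ℝ := a i - a (i + 1)
noncomputable def D (z : ℂ) (i : ℕ) : ℂ := (d i : ℂ) * G z (i + 1)
noncomputable def T (z : ℂ) (n : ℕ) : ℂ := ∑ k ∈ range n, (a k : ℂ) * z ^ k
noncomputable def Lim (z : ℂ) : ℂ := ∑' i, D z i

lemma norm_one_sub_pos {z : ℂ} (hz : z ≠ 1) : (0:ℝ) < ‖1 - z‖ := by
  rw [norm_pos_iff]
  intro h
  exact hz (by linear_combination -h)

lemma norm_G_le {z : ℂ} (hz1 : ‖z‖ = 1) (hz : z ≠ 1) (n : ℕ) : ‖G z n‖ ≤ 2 / ‖1 - z‖ := by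
  rw [G, geom_sum_eq hz n, norm_div, norm_sub_rev z 1]
  gcongr
  calc ‖z ^ n - 1‖ ≤ ‖z ^ n‖ + ‖(1:ℂ)‖ := norm_sub_le _ _
    _ = 2 := by rw [norm_pow, hz1, norm_one]; norm_num

lemma d_nonneg (i : ℕ) : 0 ≤ d i := sub_nonneg.mpr (a_antitone (Nat.le_succ i))

lemma hasSum_d_tail (n : ℕ) : HasSum (fun i => d (i + n)) (a n) := by
  rw [hasSum_iff_tendsto_nat_of_nonneg (fun i => d_nonneg (i + n))]
  have hpart : ∀ m : ℕ, ∑ i ∈ range m, d (i + n) = a n - a (m + n) := by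
    intro m
    induction m with
    | zero => simp
    | succ m ih =>
      rw [Finset.sum_range_succ, ih, d]
      have h1 : m + n + 1 = m + 1 + n := by omega
      rw [h1]
      ring
  simp_rw [hpart]
  have h3 : Tendsto (fun m : ℕ => a (m + n)) atTop (nhds 0) :=
    a_tendsto_zero.comp (tendsto_add_atTop_nat n)
  simpa using tendsto_const_nhds.sub h3

lemma norm_D_le {z : ℂ} (hz1 : ‖z‖ = 1) (hz : z ≠ 1) (i : ℕ) :
    ‖D z i‖ ≤ d i * (2 / ‖1 - z‖) := by
  rw [D, norm_mul, Complex.norm_real, Real.norm_of_nonneg (d_nonneg i)]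
  exact mul_le_mul_of_nonneg_left (norm_G_le hz1 hz (i+1)) (d_nonneg i)

lemma summable_d : Summable d := (hasSum_d_tail 0).summable.congr (by simp)

lemma summable_D {z : ℂ} (hz1 : ‖z‖ = 1) (hz : z ≠ 1) : Summable (D z) :=
  Summable.of_norm (Summable.of_nonneg_of_le (fun i => norm_nonneg _) (fun i => norm_D_le hz1 hz i)
    (summable_d.mul_right _))

lemma byparts (z : ℂ) (n : ℕ) :
    T z (n + 1) = (a n : ℂ) * G z (n + 1) + ∑ i ∈ range n, D z i := by
  induction n with
  | zero => simp [T, G]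
  | succ n ih =>
    rw [T, Finset.sum_range_succ, ← T, ih, Finset.sum_range_succ, D, d]
    have hG : G z (n + 2) = G z (n + 1) + z ^ (n + 1) := by
      rw [G, G, Finset.sum_range_succ]
    rw [hG]
    push_cast
    ring

lemma key_bound {z : ℂ} (hz1 : ‖z‖ = 1) (hz : z ≠ 1) (n : ℕ) :
    ‖Lim z - T z (n + 1)‖ ≤ 2 * (2 / ‖1 - z‖) * a n := by
  have hsum := summable_D hz1 hz
  have hsplit := Summable.sum_add_tsum_nat_add (f := D z) n hsum
  have htail : ‖∑' i, D z (i + n)‖ ≤ (2 / ‖1 - z‖) * a n := by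
    have hnorm : Summable (fun i => ‖D z (i + n)‖) :=
      (hsum.norm).comp_injective (add_left_injective n)
    calc ‖∑' i, D z (i + n)‖ ≤ ∑' i, ‖D z (i + n)‖ := norm_tsum_le_tsum_norm hnorm
      _ ≤ ∑' i, d (i + n) * (2 / ‖1 - z‖) := by
          apply Summable.tsum_le_tsum (fun i => norm_D_le hz1 hz (i + n)) hnorm
          exact (hasSum_d_tail n).summable.mul_right _
      _ = a n * (2 / ‖1 - z‖) := ((hasSum_d_tail n).mul_right _).tsum_eq
      _ = (2 / ‖1 - z‖) * a n := mul_comm _ _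
  have hrw : Lim z - T z (n + 1) = (∑' i, D z (i + n)) - (a n : ℂ) * G z (n + 1) := by
    rw [byparts z n, Lim, ← hsplit]
    ring
  rw [hrw]
  calc ‖(∑' i, D z (i + n)) - (a n : ℂ) * G z (n + 1)‖
      ≤ ‖∑' i, D z (i + n)‖ + ‖(a n : ℂ) * G z (n + 1)‖ := norm_sub_le _ _
    _ ≤ (2 / ‖1 - z‖) * a n + (2 / ‖1 - z‖) * a n := by
        apply add_le_add htail
        rw [norm_mul, Complex.norm_real, Real.norm_of_nonneg (a_nonneg n), mul_comm]
        exact mul_le_mul_of_nonneg_right (norm_G_le hz1 hz (n+1)) (a_nonneg n)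
    _ = 2 * (2 / ‖1 - z‖) * a n := by ring

lemma T_tendsto {z : ℂ} (hz1 : ‖z‖ = 1) (hz : z ≠ 1) :
    Tendsto (T z) atTop (nhds (Lim z)) := by
  rw [← tendsto_add_atTop_iff_nat 1]
  have h0 : Tendsto (fun n : ℕ => 2 * (2 / ‖1 - z‖) * a n) atTop (nhds 0) := by
    simpa using a_tendsto_zero.const_mul (2 * (2 / ‖1 - z‖))
  rw [tendsto_iff_dist_tendsto_zero]
  apply squeeze_zero (fun n => dist_nonneg) (fun n => ?_) h0
  rw [dist_eq_norm, ← norm_neg, neg_sub]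
  exact key_bound hz1 hz n


end CBW

open CBW in
theorem central_binomial_weighted_sum_boundary
    (α : ℂ) (hα : ‖α‖ = 1 / 4) (hα' : α ≠ 1 / 4) :
    (fun n : ℕ =>
       (∑ k ∈ Finset.range (n + 1), α ^ k * ((2 * k).choose k : ℂ)) -
         Complex.exp (-(1 / 2) * Complex.log (1 - 4 * α)))
      =O[atTop] fun n : ℕ => (n : ℝ) ^ (-(1 : ℝ) / 2) := by
  set z : ℂ := 4 * α with hzdef
  have hz1 : ‖z‖ = 1 := by
    rw [hzdef, norm_mul, hα]
    norm_num
  have hz : z ≠ 1 := by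
    rw [hzdef]
    intro h
    apply hα'
    field_simp
    linear_combination h
  -- identify the limit
  have hre : z.re < 1 := by
    rcases lt_or_eq_of_le (le_trans (Complex.re_le_norm z) (le_of_eq hz1)) with h | h
    · exact h
    · exfalso
      have hsq : ‖z‖ ^ 2 = 1 := by
        rw [hz1]; norm_num
      rw [Complex.sq_norm, Complex.normSq_apply, h] at hsq
      have him : z.im = 0 := by nlinarith
      exact hz (Complex.ext h him)
  have hT := T_tendsto hz1 hz
  have hAbel := Complex.tendsto_tsum_powerSeries_nhdsWithin_stolzSet
    (f := fun k => (a k : ℂ) * z ^ k) (l := Lim z) hT (M := 2)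
  have hmap : Tendsto (fun x : ℝ => ∑' n, ((a n : ℂ) * z ^ n) * (x:ℂ) ^ n)
      (nhdsWithin (1:ℝ) (Set.Iio (1:ℝ))) (nhds (Lim z)) := by
    have h1 := hAbel.mono_left (Complex.nhdsWithin_lt_le_nhdsWithin_stolzSet (M := 2) one_lt_two)
    exact tendsto_map'_iff.mp h1
  have heq : ∀ᶠ (x : ℝ) in nhdsWithin (1:ℝ) (Set.Iio (1:ℝ)),
      ∑' n, ((a n : ℂ) * z ^ n) * (x:ℂ) ^ n
        = Complex.exp (-(1/2) * Complex.log (1 - (x:ℂ) * z)) := by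
    filter_upwards [Ioo_mem_nhdsLT_of_mem (show (1:ℝ) ∈ Set.Ioc 0 1 by norm_num)] with x hx
    have hxz : ‖(x:ℂ) * z‖ < 1 := by
      rw [norm_mul, hz1, mul_one, Complex.norm_real, Real.norm_of_nonneg hx.1.le]
      exact hx.2
    rw [← f_eq hxz]
    apply tsum_congr
    intro k
    rw [mul_pow]
    ring
  have hcont : Tendsto (fun x : ℝ => Complex.exp (-(1/2) * Complex.log (1 - (x:ℂ) * z)))
      (nhdsWithin (1:ℝ) (Set.Iio (1:ℝ))) (nhds (Complex.exp (-(1/2) * Complex.log (1 - z)))) := by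
    have hca : ContinuousAt (fun x : ℝ => Complex.exp (-(1/2) * Complex.log (1 - (x:ℂ) * z))) 1 := by
      apply Complex.continuous_exp.continuousAt.comp
      apply ContinuousAt.mul continuousAt_const
      apply ContinuousAt.clog
      · exact (continuous_const.sub (Complex.continuous_ofReal.mul continuous_const)).continuousAt
      · left
        simp only [Complex.ofReal_one, one_mul, Complex.sub_re, Complex.one_re]
        linarith
    have := hca.tendsto.mono_left (nhdsWithin_le_nhds (s := Set.Iio (1:ℝ)))
    simpa using this
  have hL : Lim z = Complex.exp (-(1/2) * Complex.log (1 - z)) :=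
    tendsto_nhds_unique (hmap.congr' heq) hcont
  -- final bound
  have hrw : ∀ n : ℕ, (∑ k ∈ Finset.range (n + 1), α ^ k * ((2 * k).choose k : ℂ)) = T z (n+1) := by
    intro n
    simp only [T]
    apply Finset.sum_congr rfl
    intro k _
    rw [← Nat.centralBinom_eq_two_mul_choose]
    unfold a
    push_cast
    rw [hzdef, mul_pow]
    have h4 : ((4:ℂ))^k ≠ 0 := pow_ne_zero _ (by norm_num)
    field_simp
  rw [isBigO_iff]
  refine ⟨2 * (2 / ‖1 - z‖), ?_⟩
  filter_upwards [eventually_ge_atTop 1] with n hn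
  rw [hrw n, ← hL, norm_sub_rev]
  calc ‖Lim z - T z (n+1)‖ ≤ 2*(2/‖1-z‖) * a n := key_bound hz1 hz n
    _ ≤ 2*(2/‖1-z‖) * ((n:ℝ)^(-(1:ℝ)/2)) := by
        apply mul_le_mul_of_nonneg_left (a_le_inv_sqrt hn)
        positivity
    _ = 2*(2/‖1-z‖) * ‖(n:ℝ)^(-(1:ℝ)/2)‖ := by
        rw [Real.norm_of_nonneg (Real.rpow_nonneg (Nat.cast_nonneg n) _)]
end

section
/- Let p be an odd prime and let q = p^r be a power of p (r ≥ 1). Then in the polynomial ring (ℤ/pℤ)[X] one has ∑_{k=0}^{q-1} C(2k,k)·X^k = (1 − 4X)^{(q-1)/2}, where each central binomial coefficient C(2k,k) is reduced modulo p. -/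
/-!
The truncation `F = ∑_{k<q} C(2k,k) X^k` of `(1 - 4X)^{-1/2}` satisfies `(1 - 4X) F² ≡ 1 mod X^q`
by the convolution identity `∑_{i+j=n} C(2i,i) C(2j,j) = 4^n`. In characteristic `p` the
polynomial `G = (1 - 4X)^{(q-1)/2}` satisfies `(1 - 4X) G² = (1 - 4X)^q = 1 - 4X^q ≡ 1 mod X^q`
as well. Hence `X^q` divides `(1 - 4X)(F + G)(F - G)`; as `p` is odd, `X` divides neither
`1 - 4X` nor `F + G` (constant term `2`), so `X^q ∣ F - G`, and both have degree `< q`.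
-/

open Finset Polynomial

namespace Nat

theorem two_mul_sum_antidiagonal_fst_mul_centralBinom (n : ℕ) :
    2 * ∑ ij ∈ antidiagonal n, ij.1 * centralBinom ij.1 * centralBinom ij.2 =
      n * ∑ ij ∈ antidiagonal n, centralBinom ij.1 * centralBinom ij.2 := by
  have hswap : ∑ ij ∈ antidiagonal n, ij.1 * centralBinom ij.1 * centralBinom ij.2 =
      ∑ ij ∈ antidiagonal n, ij.2 * centralBinom ij.1 * centralBinom ij.2 := by
    rw [← Finset.Nat.sum_antidiagonal_swap]
    exact sum_congr rfl fun ij _ => by simp only [Prod.fst_swap, Prod.snd_swap]; ring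
  rw [two_mul]
  nth_rw 2 [hswap]
  rw [← sum_add_distrib, mul_sum]
  refine sum_congr rfl fun ij hij => ?_
  rw [← mem_antidiagonal.1 hij]
  ring

theorem sum_antidiagonal_succ_fst_mul_centralBinom (n : ℕ) :
    ∑ ij ∈ antidiagonal (n + 1), ij.1 * centralBinom ij.1 * centralBinom ij.2 =
      4 * ∑ ij ∈ antidiagonal n, ij.1 * centralBinom ij.1 * centralBinom ij.2 +
        2 * ∑ ij ∈ antidiagonal n, centralBinom ij.1 * centralBinom ij.2 := by
  rw [Finset.Nat.sum_antidiagonal_succ, zero_mul, zero_mul, zero_add, mul_sum, mul_sum,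
    ← sum_add_distrib]
  refine sum_congr rfl fun ij _ => ?_
  rw [succ_mul_centralBinom_succ]
  ring

theorem sum_antidiagonal_centralBinom_mul_centralBinom (n : ℕ) :
    ∑ ij ∈ antidiagonal n, centralBinom ij.1 * centralBinom ij.2 = 4 ^ n := by
  induction n with
  | zero => simp
  | succ n ih =>
    -- With `S n = ∑ cᵢ cⱼ` and `T n = ∑ i cᵢ cⱼ`:
    -- `(n + 1) S (n + 1) = 2 T (n + 1) = 8 T n + 4 S n = 4 (n + 1) S n`.
    have key := two_mul_sum_antidiagonal_fst_mul_centralBinom (n + 1)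
    rw [sum_antidiagonal_succ_fst_mul_centralBinom, mul_add, ← mul_assoc, ← mul_assoc,
      mul_comm 2 4, mul_assoc 4, two_mul_sum_antidiagonal_fst_mul_centralBinom, ih] at key
    rw [pow_succ]
    refine Nat.eq_of_mul_eq_mul_left (by omega : 0 < n + 1) ?_
    rw [← key]
    ring

end Nat

namespace Polynomial

variable {R : Type*} [CommRing R]

theorem coeff_sum_range_C_mul_X_pow (a : ℕ → R) (n d : ℕ) :
    (∑ k ∈ range n, C (a k) * X ^ k).coeff d = if d < n then a d else 0 := by
  simp [coeff_C_mul, coeff_X_pow]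

theorem degree_sum_range_C_mul_X_pow_lt (a : ℕ → R) (n : ℕ) :
    (∑ k ∈ range n, C (a k) * X ^ k).degree < (n : WithBot ℕ) :=
  (degree_sum_le _ _).trans_lt <| (Finset.sup_lt_iff <| WithBot.bot_lt_coe n).2 fun _ hk =>
    (degree_C_mul_X_pow_le _ _).trans_lt <| WithBot.coe_lt_coe.2 (mem_range.1 hk)

theorem coeff_sq_sum_range_centralBinom {n d : ℕ} (hd : d < n) :
    ((∑ k ∈ range n, C (k.centralBinom : R) * X ^ k) ^ 2).coeff d = 4 ^ d := by
  rw [sq, coeff_mul]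
  calc _ = ∑ ij ∈ antidiagonal d, ((ij.1.centralBinom * ij.2.centralBinom : ℕ) : R) := by
        refine sum_congr rfl fun ij hij => ?_
        have hij := mem_antidiagonal.1 hij
        rw [coeff_sum_range_C_mul_X_pow, coeff_sum_range_C_mul_X_pow, if_pos (by omega),
          if_pos (by omega), Nat.cast_mul]
    _ = 4 ^ d := by
        rw [← Nat.cast_sum, Nat.sum_antidiagonal_centralBinom_mul_centralBinom]; push_cast; rfl

theorem X_pow_dvd_one_sub_four_mul_X_mul_sq_sum_range_centralBinom_sub_one (n : ℕ) :
    X ^ n ∣ (1 - 4 * X) * (∑ k ∈ range n, C (k.centralBinom : R) * X ^ k) ^ 2 - 1 := by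
  set F := ∑ k ∈ range n, C (k.centralBinom : R) * X ^ k
  have hgeom : X ^ n ∣ F ^ 2 - ∑ i ∈ range n, (4 * X : R[X]) ^ i := by
    refine X_pow_dvd_iff.2 fun d hd => ?_
    have h4 : ∀ i, (4 * X : R[X]) ^ i = C (4 ^ i) * X ^ i := fun i => by
      rw [mul_pow, C_pow, ← map_ofNat C 4]
    simp only [F, h4, coeff_sub, coeff_sum_range_C_mul_X_pow, if_pos hd,
      coeff_sq_sum_range_centralBinom hd, sub_self]
  have hsplit : (1 - 4 * X) * F ^ 2 - 1 =
      (1 - 4 * X) * (F ^ 2 - ∑ i ∈ range n, (4 * X) ^ i) - 4 ^ n * X ^ n := by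
    rw [mul_sub, mul_neg_geom_sum]; ring
  rw [hsplit]
  exact dvd_sub (dvd_mul_of_dvd_right hgeom _) (dvd_mul_left _ _)

theorem X_pow_dvd_sub_of_X_pow_dvd_mul_sq_sub_one [IsDomain R] (h2 : (2 : R) ≠ 0)
    {u f g : R[X]} {n : ℕ} (hu : ¬ X ∣ u) (hf : X ^ n ∣ u * f ^ 2 - 1)
    (hg : X ^ n ∣ u * g ^ 2 - 1) (hf0 : f.coeff 0 = 1) (hg0 : g.coeff 0 = 1) :
    X ^ n ∣ f - g := by
  have hfg : X ^ n ∣ u * (f + g) * (f - g) := by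
    have := dvd_sub hf hg
    rwa [sub_sub_sub_cancel_right, ← mul_sub, sq_sub_sq, ← mul_assoc] at this
  have hsum : ¬ X ∣ f + g := by
    rw [X_dvd_iff, coeff_add, hf0, hg0, one_add_one_eq_two]
    exact h2
  exact prime_X.pow_dvd_of_dvd_mul_left n hsum
    (prime_X.pow_dvd_of_dvd_mul_left n hu (by rwa [mul_assoc] at hfg))

theorem eq_of_X_pow_dvd_sub {f g : R[X]} {n : ℕ} (h : X ^ n ∣ f - g)
    (hf : f.degree < n) (hg : g.degree < n) : f = g := by
  refine sub_eq_zero.1 (ext fun d => ?_)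
  rw [coeff_zero]
  rcases lt_or_ge d n with hd | hd
  · exact X_pow_dvd_iff.1 h d hd
  · exact coeff_eq_zero_of_degree_lt
      ((degree_sub_le f g).trans_lt ((max_lt hf hg).trans_le (by exact_mod_cast hd)))

theorem one_sub_C_mul_X_pow_prime_pow (p : ℕ) [Fact p.Prime] (a : ZMod p) (r : ℕ) :
    (1 - C a * X) ^ p ^ r = 1 - C a * X ^ p ^ r := by
  rw [sub_pow_char_pow, one_pow, mul_pow, ← C_pow, ZMod.pow_card_pow]

end Polynomial

theorem central_binomial_polynomial_mod_p_general
    (p : ℕ) (hp : p.Prime) (hodd : Odd p) (r : ℕ) (q : ℕ) (hq : q = p ^ r) :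
    ∑ k ∈ Finset.range q, Polynomial.C (((2 * k).choose k : ZMod p)) * Polynomial.X ^ k =
      (1 - 4 * Polynomial.X : Polynomial (ZMod p)) ^ ((q - 1) / 2) := by
  have := Fact.mk hp
  obtain ⟨m, hm⟩ : Odd q := hq ▸ hodd.pow
  rw [show (q - 1) / 2 = m by omega]
  have h2 : (2 : ZMod p) ≠ 0 :=
    Ring.two_ne_zero (by rw [ZMod.ringChar_zmod_n]; exact hodd.ne_two_of_dvd_nat dvd_rfl)
  have h4 : (4 : (ZMod p)[X]) = C 4 := (map_ofNat C 4).symm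
  have hu : ¬ X ∣ (1 - 4 * X : (ZMod p)[X]) := by simp [X_dvd_iff, h4]
  have hF := X_pow_dvd_one_sub_four_mul_X_mul_sq_sum_range_centralBinom_sub_one (R := ZMod p) q
  have hG : X ^ q ∣ (1 - 4 * X) * ((1 - 4 * X : (ZMod p)[X]) ^ m) ^ 2 - 1 := by
    rw [← pow_mul, ← pow_succ', show m * 2 + 1 = q by omega, hq, h4,
      one_sub_C_mul_X_pow_prime_pow, sub_sub_cancel_left]
    exact (dvd_mul_left _ _).neg_right
  have hF0 : (∑ k ∈ range q, C (k.centralBinom : ZMod p) * X ^ k).coeff 0 = 1 := by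
    rw [coeff_sum_range_C_mul_X_pow, if_pos (by omega), Nat.centralBinom_zero, Nat.cast_one]
  have hG0 : ((1 - 4 * X : (ZMod p)[X]) ^ m).coeff 0 = 1 := by
    simp [coeff_zero_eq_eval_zero]
  have hGdeg : ((1 - 4 * X : (ZMod p)[X]) ^ m).degree < q := by
    have : ((1 - 4 * X : (ZMod p)[X]) ^ m).degree ≤ m := by compute_degree!
    exact this.trans_lt (by exact_mod_cast (by omega : m < q))
  exact eq_of_X_pow_dvd_sub (X_pow_dvd_sub_of_X_pow_dvd_mul_sq_sub_one h2 hu hF hG hF0 hG0)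
    (degree_sum_range_C_mul_X_pow_lt _ q) hGdeg

theorem central_binomial_polynomial_mod_p
    (p : ℕ) (hp : p.Prime) (hodd : Odd p) (r : ℕ) (hr : 1 ≤ r) (q : ℕ) (hq : q = p ^ r) :
    ∑ k ∈ Finset.range q, Polynomial.C (((2 * k).choose k : ZMod p)) * Polynomial.X ^ k =
      (1 - 4 * Polynomial.X : Polynomial (ZMod p)) ^ ((q - 1) / 2) :=
  central_binomial_polynomial_mod_p_general p hp hodd r q hq
end

section
/- Let p be an odd prime and let q = p^r be a power of p (r ≥ 1). Then in the polynomial ring (ℤ/pℤ)[X] one has 2X · (∑_{k=0}^{q-1} C_k·X^k) = 1 − (1 − 4X)^{(q+1)/2} − 2X^q, where each Catalan number C_k is reduced modulo p. (Equivalently, ∑_{k=0}^{q-1} C_k x^k ≡ (1 − (1−4x)^{(q+1)/2})/(2x) − x^{q-1} mod p.) -/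
/-!
Let `S = ∑_{k<q} C_k X^k` and `T = 1 - 2XS`. The Catalan recurrence gives `S ≡ 1 + XS²` modulo
`X^q`, hence `T² ≡ 1 - 4X` modulo `X^(q+1)`, and since `q` is odd,
`T^(q+1) ≡ (1 - 4X)^((q+1)/2)`. On the other hand Frobenius gives `T^q = 1 - 2X^q S(X^q)`, which is
`1 - 2X^q` modulo `X^(2q)`, so `T^(q+1) ≡ T - 2X^q` modulo `X^(q+1)`. Both `T - 2X^q` and
`(1 - 4X)^((q+1)/2)` have degree at most `q`, so they are equal.
-/

open Finset Polynomial

theorem eq_of_X_pow_dvd_sub_of_natDegree_lt {R : Type*} [Ring R] {f g : R[X]} {n : ℕ}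
    (h : X ^ n ∣ f - g) (hf : f.natDegree < n) (hg : g.natDegree < n) : f = g := by
  refine sub_eq_zero.1 (ext fun d => ?_)
  rw [coeff_zero]
  by_cases hd : d < n
  · exact X_pow_dvd_iff.1 h d hd
  · rw [coeff_sub, coeff_eq_zero_of_natDegree_lt (by omega),
      coeff_eq_zero_of_natDegree_lt (by omega), sub_zero]

theorem X_pow_dvd_expand_sub_one {R : Type*} [CommRing R] {f : R[X]} (hf : X ∣ f - 1) (n : ℕ) :
    X ^ n ∣ expand R n f - 1 := by
  simpa using map_dvd (expand R n) hf

noncomputable def truncCatalan (R : Type*) [Semiring R] (n : ℕ) : R[X] :=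
  ∑ k ∈ range n, C (catalan k : R) * X ^ k

section CommRing

variable {R : Type*} [CommRing R]

theorem coeff_truncCatalan (n i : ℕ) :
    (truncCatalan R n).coeff i = if i < n then (catalan i : R) else 0 := by
  simp [truncCatalan, coeff_X_pow]

theorem natDegree_truncCatalan_le (n : ℕ) : (truncCatalan R n).natDegree ≤ n - 1 := by
  rw [natDegree_le_iff_coeff_eq_zero]
  intro i hi
  rw [coeff_truncCatalan, if_neg (by omega)]

theorem X_dvd_truncCatalan_sub_one {n : ℕ} (hn : 0 < n) : X ∣ truncCatalan R n - 1 := by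
  simp [X_dvd_iff, coeff_truncCatalan, hn]

theorem X_pow_dvd_one_add_X_mul_truncCatalan_sq_sub (n : ℕ) :
    X ^ n ∣ 1 + X * truncCatalan R n ^ 2 - truncCatalan R n := by
  rw [X_pow_dvd_iff]
  rintro (_ | d) hd
  · simp [mul_coeff_zero, coeff_truncCatalan, hd]
  · have hsq : (truncCatalan R n ^ 2).coeff d = (catalan (d + 1) : R) := by
      rw [sq, coeff_mul, catalan_succ', Nat.cast_sum]
      refine sum_congr rfl fun ij hij => ?_
      rw [HasAntidiagonal.mem_antidiagonal] at hij
      rw [coeff_truncCatalan, coeff_truncCatalan, if_pos (by omega), if_pos (by omega),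
        Nat.cast_mul]
    simp [coeff_one, coeff_X_mul, hsq, coeff_truncCatalan, hd]

theorem X_pow_succ_dvd_one_sub_two_X_mul_truncCatalan_pow_sub {n k : ℕ} (h : n + 1 = 2 * k) :
    X ^ (n + 1) ∣ (1 - 2 * X * truncCatalan R n) ^ (n + 1) - (1 - 4 * X) ^ k := by
  obtain ⟨c, hc⟩ := X_pow_dvd_one_add_X_mul_truncCatalan_sq_sub (R := R) n
  have hsq : X ^ (n + 1) ∣ (1 - 2 * X * truncCatalan R n) ^ 2 - (1 - 4 * X) :=
    ⟨4 * c, by linear_combination 4 * X * hc⟩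
  have hpow := hsq.trans (sub_dvd_pow_sub_pow _ _ k)
  rwa [← pow_mul, ← h] at hpow

theorem natDegree_one_sub_two_X_mul_truncCatalan_sub_le {n : ℕ} (hn : 0 < n) :
    (1 - 2 * X * truncCatalan R n - 2 * X ^ n).natDegree ≤ n := by
  have h2X : (2 * X : R[X]).natDegree ≤ 1 := by compute_degree
  have hXS : (2 * X * truncCatalan R n).natDegree ≤ n :=
    (natDegree_mul_le_of_le h2X (natDegree_truncCatalan_le n)).trans (by omega)
  have hXn : (2 * X ^ n : R[X]).natDegree ≤ n := by compute_degree
  exact (natDegree_sub_le_of_le (natDegree_sub_le_of_le natDegree_one.le hXS) hXn).trans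
    (by simp)

end CommRing

section ZMod

variable {p : ℕ} [Fact p.Prime]

theorem ZMod.expand_card_pow (f : (ZMod p)[X]) (r : ℕ) :
    expand (ZMod p) (p ^ r) f = f ^ p ^ r := by
  induction r with
  | zero => simp
  | succ r ih => rw [pow_succ, expand_mul, ZMod.expand_card, map_pow, ih, pow_mul]

theorem X_pow_succ_dvd_one_sub_two_X_mul_pow_succ_sub {f : (ZMod p)[X]} (hf : X ∣ f - 1)
    (r : ℕ) :
    X ^ (p ^ r + 1) ∣ (1 - 2 * X * f) ^ (p ^ r + 1) - (1 - 2 * X * f - 2 * X ^ p ^ r) := by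
  have hfrob : (1 - 2 * X * f) ^ p ^ r = 1 - 2 * X ^ p ^ r * expand (ZMod p) (p ^ r) f := by
    rw [← ZMod.expand_card_pow]
    simp [map_ofNat]
  obtain ⟨c, hc⟩ := X_pow_dvd_expand_sub_one hf (p ^ r)
  obtain ⟨s, hs⟩ : ∃ s, p ^ r = s + 1 :=
    Nat.exists_eq_add_one.2 (pow_pos (Fact.out : p.Prime).pos r)
  rw [pow_succ (1 - 2 * X * f), hfrob]
  generalize expand (ZMod p) (p ^ r) f = e at hc
  rw [hs] at hc ⊢
  exact ⟨4 * f - 2 * X ^ s * c * (1 - 2 * X * f),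
    by linear_combination (-2 * X ^ (s + 1) * (1 - 2 * X * f)) * hc⟩

end ZMod

theorem catalan_polynomial_mod_p_general
    (p : ℕ) (hp : p.Prime) (hodd : Odd p) (r : ℕ) (q : ℕ) (hq : q = p ^ r) :
    2 * Polynomial.X *
        ∑ k ∈ Finset.range q, Polynomial.C ((catalan k : ZMod p)) * Polynomial.X ^ k =
      1 - (1 - 4 * Polynomial.X : Polynomial (ZMod p)) ^ ((q + 1) / 2)
        - 2 * Polynomial.X ^ q := by
  have := Fact.mk hp
  change 2 * X * truncCatalan (ZMod p) q = _
  have hq_odd : Odd q := hq ▸ hodd.pow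
  have hq_pos : 0 < q := hq_odd.pos
  have hsq := X_pow_succ_dvd_one_sub_two_X_mul_truncCatalan_pow_sub (R := ZMod p)
    (n := q) (k := (q + 1) / 2) (by obtain ⟨m, hm⟩ := hq_odd; omega)
  have hfrob := X_pow_succ_dvd_one_sub_two_X_mul_pow_succ_sub
    (X_dvd_truncCatalan_sub_one (R := ZMod p) hq_pos) r
  rw [← hq] at hfrob
  have hdvd := dvd_sub hsq hfrob
  rw [sub_sub_sub_cancel_left] at hdvd
  have hdeg : ((1 - 4 * X : (ZMod p)[X]) ^ ((q + 1) / 2)).natDegree ≤ q :=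
    (natDegree_pow_le_of_le _ (by compute_degree : (1 - 4 * X : (ZMod p)[X]).natDegree ≤ 1)).trans
      (by omega)
  linear_combination -eq_of_X_pow_dvd_sub_of_natDegree_lt hdvd
    (Nat.lt_succ_of_le (natDegree_one_sub_two_X_mul_truncCatalan_sub_le hq_pos))
    (Nat.lt_succ_of_le hdeg)

theorem catalan_polynomial_mod_p
    (p : ℕ) (hp : p.Prime) (hodd : Odd p) (r : ℕ) (hr : 1 ≤ r) (q : ℕ) (hq : q = p ^ r) :
    2 * Polynomial.X *
        ∑ k ∈ Finset.range q, Polynomial.C ((catalan k : ZMod p)) * Polynomial.X ^ k =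
      1 - (1 - 4 * Polynomial.X : Polynomial (ZMod p)) ^ ((q + 1) / 2)
        - 2 * Polynomial.X ^ q :=
  catalan_polynomial_mod_p_general p hp hodd r q hq
end

section
/- Let p be a prime and let q = p^r be a power of p (r ≥ 1). Then ∑_{k=0}^{q-1} C(2k,k) ≡ (q/3) (mod p), where (q/3) denotes the Legendre symbol of q modulo 3; i.e., the image of ∑_{k=0}^{q-1} C(2k,k) in ℤ/pℤ equals the image of the integer (q/3) ∈ {0, 1, −1}. -/
/-!
By Lucas' theorem, `C(2(pn + a), pn + a) ≡ C(2a, a) C(2n, n) (mod p)` for `a < p` (when `2a ≥ p`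
both sides vanish), so the partial sums `S(n) = ∑_{k<n} C(2k, k)` satisfy `S(pn) ≡ S(p) S(n)`, and
hence `S(p^r) ≡ S(p)^r`; as the symbol is multiplicative, it remains to show `S(p) ≡ (p/3)`.
For odd `p`, `C(2k, k) = (-4)^k C(-1/2, k)` and `-1/2 ≡ (p - 1)/2 (mod p)`, so the binomial theorem
gives `S(p) ≡ (1 - 4)^((p-1)/2) = (-3)^((p-1)/2) ≡ (-3/p) = (p/3)` by Euler's criterion and
quadratic reciprocity; for `p = 2`, `S(2) = 3 ≡ -1`.
-/

open Finset

def centralBinomSum (n : ℕ) : ℕ := ∑ k ∈ range n, k.centralBinom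

theorem centralBinomSum_succ (n : ℕ) :
    centralBinomSum (n + 1) = centralBinomSum n + n.centralBinom :=
  sum_range_succ _ _

theorem natCast_choose_succ_mul {R : Type*} [CommRing R] (m k : ℕ) :
    (m.choose (k + 1) : R) * (k + 1) = m.choose k * (m - k) := by
  rcases le_or_gt k m with h | h
  · have h' := congrArg (Nat.cast : ℕ → R) (Nat.choose_succ_right_eq m k)
    push_cast [Nat.cast_sub h] at h'
    exact h'
  · simp [Nat.choose_eq_zero_of_lt h, Nat.choose_eq_zero_of_lt (h.trans (Nat.lt_succ_self _))]

section
variable {p : ℕ} [Fact p.Prime]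

theorem natCast_choose_mul_add {n k a b : ℕ} (ha : a < p) (hb : b < p) :
    ((p * n + a).choose (p * k + b) : ZMod p) = a.choose b * n.choose k := by
  have hp : 0 < p := NeZero.pos p
  have h := (Choose.choose_modEq_choose_mod_mul_choose_div (p := p)
    (n := p * n + a) (k := p * k + b))
  rw [← ZMod.intCast_eq_intCast_iff] at h
  push_cast at h
  rwa [Nat.mul_add_mod, Nat.mul_add_mod, Nat.mod_eq_of_lt ha, Nat.mod_eq_of_lt hb,
    Nat.mul_add_div hp, Nat.mul_add_div hp, Nat.div_eq_of_lt ha, Nat.div_eq_of_lt hb, add_zero,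
    add_zero] at h

theorem natCast_centralBinom_mul_add {n a : ℕ} (ha : a < p) :
    ((p * n + a).centralBinom : ZMod p) = a.centralBinom * n.centralBinom := by
  simp only [Nat.centralBinom_eq_two_mul_choose]
  rcases lt_or_ge (2 * a) p with h | h
  · rw [show 2 * (p * n + a) = p * (2 * n) + 2 * a by ring, natCast_choose_mul_add h ha]
  · obtain ⟨c, hc⟩ : ∃ c, 2 * a = p + c := ⟨2 * a - p, by omega⟩
    -- `c < a` is the lowest base-`p` digit of `2 * a`
    have hca : c.choose a = 0 := Nat.choose_eq_zero_of_lt (by omega)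
    have hc' : 2 * (p * n + a) = p * (2 * n + 1) + c := by grind
    have hlhs := natCast_choose_mul_add (p := p) (n := 2 * n + 1) (k := n) (a := c) (b := a)
      (by omega) ha
    have hrhs := natCast_choose_mul_add (p := p) (n := 1) (k := 0) (a := c) (b := a)
      (by omega) ha
    rw [mul_one, mul_zero, zero_add, ← hc] at hrhs
    rw [hc', hlhs, hrhs, hca]
    simp

theorem natCast_centralBinomSum_mul (n : ℕ) :
    (centralBinomSum (p * n) : ZMod p) = centralBinomSum p * centralBinomSum n := by
  induction n with
  | zero => simp [centralBinomSum]
  | succ n ih =>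
    have hblock : ∑ a ∈ range p, ((p * n + a).centralBinom : ZMod p) =
        centralBinomSum p * n.centralBinom := by
      rw [centralBinomSum, Nat.cast_sum, sum_mul]
      exact sum_congr rfl fun a ha => natCast_centralBinom_mul_add (mem_range.mp ha)
    rw [Nat.mul_succ, centralBinomSum, sum_range_add, ← centralBinomSum, Nat.cast_add, ih,
      Nat.cast_sum, hblock, centralBinomSum_succ, Nat.cast_add, mul_add]

theorem natCast_centralBinomSum_pow (r : ℕ) :
    (centralBinomSum (p ^ r) : ZMod p) = (centralBinomSum p : ZMod p) ^ r := by
  induction r with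
  | zero => simp [centralBinomSum]
  | succ r ih => rw [pow_succ', natCast_centralBinomSum_mul, ih, pow_succ']

theorem natCast_centralBinom_eq_neg_four_pow_mul_choose (hp : p ≠ 2) {k : ℕ} (hk : k < p) :
    (k.centralBinom : ZMod p) = (-4) ^ k * ((p / 2).choose k : ℕ) := by
  induction k with
  | zero => simp
  | succ k ih =>
    set m := p / 2
    have hodd : p % 2 = 1 := Nat.odd_iff.mp ((Fact.out : p.Prime).odd_of_ne_two hp)
    have hm : (2 * m + 1 : ZMod p) = 0 := by
      have h : ((2 * m + 1 : ℕ) : ZMod p) = 0 := by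
        rw [show 2 * m + 1 = p by omega, ZMod.natCast_self]
      exact_mod_cast h
    have hk1 : ((k + 1 : ℕ) : ZMod p) ≠ 0 := by
      rw [Ne, ZMod.natCast_eq_zero_iff]
      exact Nat.not_dvd_of_pos_of_lt k.succ_pos hk
    have hrec := congrArg (Nat.cast : ℕ → ZMod p) (Nat.succ_mul_centralBinom_succ k)
    push_cast at hrec hk1
    apply mul_left_cancel₀ hk1
    calc ((k : ZMod p) + 1) * (k + 1).centralBinom
        = 2 * (2 * k + 1) * ((-4) ^ k * (m.choose k : ℕ)) := by rw [hrec, ih (by omega)]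
      _ = (-4) ^ (k + 1) * ((m.choose k : ℕ) * (m - k)) := by
        linear_combination 2 * (-4 : ZMod p) ^ k * (m.choose k : ℕ) * hm
      _ = (k + 1) * ((-4) ^ (k + 1) * (m.choose (k + 1) : ℕ)) := by
        rw [← natCast_choose_succ_mul]; ring

theorem natCast_centralBinomSum_eq_neg_three_pow (hp : p ≠ 2) :
    (centralBinomSum p : ZMod p) = (-3) ^ (p / 2) := by
  have hodd : p % 2 = 1 := Nat.odd_iff.mp ((Fact.out : p.Prime).odd_of_ne_two hp)
  rw [centralBinomSum, Nat.cast_sum, sum_congr rfl fun k hk =>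
      natCast_centralBinom_eq_neg_four_pow_mul_choose hp (mem_range.mp hk),
    show (-3 : ZMod p) = -4 + 1 by norm_num, add_pow]
  simp only [one_pow, mul_one]
  symm
  refine sum_subset (range_subset_range.mpr (by omega)) fun k _ hk => ?_
  rw [Nat.choose_eq_zero_of_lt (by simpa using hk), Nat.cast_zero, mul_zero]

theorem legendreSym_neg_three (hp : p ≠ 2) : legendreSym p (-3) = legendreSym 3 p := by
  have hodd : p % 2 = 1 := Nat.odd_iff.mp ((Fact.out : p.Prime).odd_of_ne_two hp)
  rw [show (-3 : ℤ) = -1 * 3 by norm_num, legendreSym.mul, legendreSym.at_neg_one hp,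
    ZMod.χ₄_eq_neg_one_pow hodd, legendreSym.quadratic_reciprocity' hp (by decide : 3 ≠ 2)]
  norm_num

theorem natCast_centralBinomSum_eq_legendreSym :
    (centralBinomSum p : ZMod p) = legendreSym 3 p := by
  rcases eq_or_ne p 2 with rfl | hp
  · rw [show legendreSym 3 (2 : ℕ) = -1 by norm_num]
    rfl
  · rw [natCast_centralBinomSum_eq_neg_three_pow hp, ← legendreSym_neg_three hp,
      legendreSym.eq_pow]
    norm_num

end

theorem central_binomial_partial_sum_mod_p_general
    (p : ℕ) (hp : p.Prime) (r : ℕ) (q : ℕ) (hq : q = p ^ r) :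
    ((∑ k ∈ Finset.range q, (2 * k).choose k : ℕ) : ZMod p) =
      ((legendreSym 3 (q : ℤ) : ℤ) : ZMod p) := by
  have := Fact.mk hp
  have hsum : ∑ k ∈ range q, (2 * k).choose k = centralBinomSum q := by
    simp only [centralBinomSum, Nat.centralBinom_eq_two_mul_choose]
  rw [hsum, hq, natCast_centralBinomSum_pow, natCast_centralBinomSum_eq_legendreSym, Nat.cast_pow,
    ← Int.cast_pow, ← legendreSym.hom_apply, ← map_pow, legendreSym.hom_apply]

theorem central_binomial_partial_sum_mod_p
    (p : ℕ) (hp : p.Prime) (r : ℕ) (hr : 1 ≤ r) (q : ℕ) (hq : q = p ^ r) :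
    ((∑ k ∈ Finset.range q, (2 * k).choose k : ℕ) : ZMod p) =
      ((legendreSym 3 (q : ℤ) : ℤ) : ZMod p) :=
  central_binomial_partial_sum_mod_p_general p hp r q hq
end

section
/- Let p be an odd prime and let q = p^r be a power of p (r ≥ 1). Then 2·∑_{k=0}^{q-1} C_k ≡ 3·(q/3) − 1 (mod p), where (q/3) denotes the Legendre symbol of q modulo 3; i.e., in ℤ/pℤ, twice the image of ∑_{k=0}^{q-1} C_k equals the image of the integer 3·(q/3) − 1. (Equivalently, ∑_{k=0}^{q-1} C_k ≡ (3·(q/3) − 1)/2 (mod p).) -/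
/-!
Writing `B k` for the central binomial coefficient, `B (k + 1) - B k = 3 B k - 2 C_k`, so
`2 ∑_{k<q} C_k = 3 ∑_{k<q} B k + 1 - B q` and everything reduces to `B` modulo `p`.
By Lucas' theorem `B` is multiplicative on base-`p` digits: `B (i + p j) ≡ B i · B j` for `i < p`
(both sides vanish when `2 i ≥ p`). Hence `B (p ^ r) ≡ B 1 = 2` and
`∑_{k<p^r} B k ≡ (∑_{i<p} B i) ^ r`. For `i < p` one has `B i ≡ (-4) ^ i · C((p-1)/2, i)`, so
`∑_{i<p} B i ≡ (1 - 4) ^ ((p-1)/2)`, which is `(-3/p) = (p/3)` by Euler's criterion and quadratic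
reciprocity. Raising to the `r`-th power gives `(q/3)`.
-/

open Finset

theorem two_mul_sum_range_catalan_add_centralBinom (n : ℕ) :
    2 * ∑ k ∈ range n, catalan k + n.centralBinom = 3 * ∑ k ∈ range n, k.centralBinom + 1 := by
  induction n with
  | zero => simp
  | succ n ih =>
    have hcat : (n + 1) * catalan n = n.centralBinom := succ_mul_catalan_eq_centralBinom n
    have hsucc : (n + 1).centralBinom = 2 * (2 * n + 1) * catalan n := by
      apply Nat.eq_of_mul_eq_mul_left (Nat.succ_pos n : 0 < n + 1)
      rw [Nat.succ_mul_centralBinom_succ, ← hcat, Nat.succ_eq_add_one]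
      ring
    rw [sum_range_succ, sum_range_succ, hsucc]
    zify at ih hcat ⊢
    linear_combination ih + 4 * hcat

namespace ZMod

variable {p : ℕ} [Fact p.Prime]

theorem natCast_choose_eq_choose_mod_mul_choose_div (n k : ℕ) :
    (n.choose k : ZMod p) = (n % p).choose (k % p) * (n / p).choose (k / p) := by
  exact_mod_cast (natCast_eq_natCast_iff _ _ _).mpr
    Choose.choose_modEq_choose_mod_mul_choose_div_nat

theorem natCast_centralBinom_eq_zero_of_le_two_mul_mod {k : ℕ} (hk : p ≤ 2 * (k % p)) :
    (k.centralBinom : ZMod p) = 0 := by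
  have hp := (Fact.out : p.Prime).pos
  have hlt : k % p < p := Nat.mod_lt k hp
  -- the lowest digit of `2 k` is `2 (k % p) - p`, which is smaller than that of `k`
  have hmod : 2 * k % p = 2 * (k % p) - p := by
    conv_lhs => rw [← Nat.mod_add_div k p]
    rw [show 2 * (k % p + p * (k / p)) = 2 * (k % p) - p + p * (2 * (k / p) + 1) by
      zify [hk]; ring, Nat.add_mul_mod_self_left, Nat.mod_eq_of_lt (by omega)]
  rw [Nat.centralBinom, natCast_choose_eq_choose_mod_mul_choose_div, hmod,
    Nat.choose_eq_zero_of_lt (by omega), Nat.cast_zero, zero_mul]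

theorem natCast_centralBinom_add_mul {i : ℕ} (hi : i < p) (j : ℕ) :
    ((i + p * j).centralBinom : ZMod p) = i.centralBinom * j.centralBinom := by
  have hp := (Fact.out : p.Prime).pos
  by_cases h : 2 * i < p
  · have hk : 2 * (i + p * j) = 2 * i + p * (2 * j) := by ring
    rw [Nat.centralBinom, natCast_choose_eq_choose_mod_mul_choose_div, hk]
    simp only [Nat.add_mul_mod_self_left, Nat.add_mul_div_left _ _ hp, Nat.mod_eq_of_lt h,
      Nat.mod_eq_of_lt hi, Nat.div_eq_of_lt h, Nat.div_eq_of_lt hi, zero_add, Nat.centralBinom]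
  · have hmod : (i + p * j) % p = i := by rw [Nat.add_mul_mod_self_left, Nat.mod_eq_of_lt hi]
    rw [natCast_centralBinom_eq_zero_of_le_two_mul_mod (by rw [hmod]; omega),
      natCast_centralBinom_eq_zero_of_le_two_mul_mod (k := i) (by rw [Nat.mod_eq_of_lt hi]; omega),
      zero_mul]

theorem natCast_centralBinom_prime_pow (r : ℕ) : ((p ^ r).centralBinom : ZMod p) = 2 := by
  induction r with
  | zero => simp [Nat.centralBinom]
  | succ r ih =>
    rw [pow_succ', ← zero_add (p * _), natCast_centralBinom_add_mul (Fact.out : p.Prime).pos, ih]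
    simp

theorem sum_range_mul_natCast_centralBinom (n : ℕ) :
    ∑ k ∈ range (p * n), (k.centralBinom : ZMod p) =
      (∑ i ∈ range p, (i.centralBinom : ZMod p)) * ∑ j ∈ range n, (j.centralBinom : ZMod p) := by
  induction n with
  | zero => simp
  | succ n ih =>
    rw [Nat.mul_succ, Finset.sum_range_add, ih, sum_range_succ, mul_add]
    congr 1
    rw [Finset.sum_mul]
    refine Finset.sum_congr rfl fun i hi => ?_
    rw [add_comm, natCast_centralBinom_add_mul (mem_range.mp hi)]

theorem sum_range_pow_natCast_centralBinom (r : ℕ) :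
    ∑ k ∈ range (p ^ r), (k.centralBinom : ZMod p) =
      (∑ i ∈ range p, (i.centralBinom : ZMod p)) ^ r := by
  induction r with
  | zero => simp
  | succ r ih => rw [pow_succ', sum_range_mul_natCast_centralBinom, ih, pow_succ']

variable (hp2 : p ≠ 2)
include hp2

theorem natCast_centralBinom_eq_neg_four_pow_mul_choose {i : ℕ} (hi : i ≤ p / 2) :
    (i.centralBinom : ZMod p) = (-4) ^ i * (p / 2).choose i := by
  induction i with
  | zero => simp
  | succ i ih =>
    have hp_odd := (Fact.out : p.Prime).odd_of_ne_two hp2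
    have hhalf : 2 * ((p / 2 : ℕ) : ZMod p) + 1 = 0 := by
      have h : ((2 * (p / 2) + 1 : ℕ) : ZMod p) = 0 := by
        rw [Nat.two_mul_div_two_add_one_of_odd hp_odd, natCast_self]
      exact_mod_cast h
    have hB : ((i : ZMod p) + 1) * (i + 1).centralBinom = 2 * (2 * i + 1) * i.centralBinom := by
      exact_mod_cast congrArg (Nat.cast : ℕ → ZMod p) (Nat.succ_mul_centralBinom_succ i)
    have hC : ((p / 2).choose (i + 1) : ZMod p) * (i + 1) = (p / 2).choose i * ((p / 2 : ℕ) - i) := by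
      have h := congrArg (Nat.cast : ℕ → ZMod p) (Nat.choose_succ_right_eq (p / 2) i)
      push_cast [Nat.cast_sub (by omega : i ≤ p / 2)] at h
      exact h
    have hne : (i : ZMod p) + 1 ≠ 0 := by
      have h : ((i + 1 : ℕ) : ZMod p) ≠ 0 := by
        rw [Ne, natCast_eq_zero_iff]
        exact Nat.not_dvd_of_pos_of_lt (by omega) (by omega)
      exact_mod_cast h
    apply mul_left_cancel₀ hne
    rw [hB, ih (by omega)]
    linear_combination 4 * (-4 : ZMod p) ^ i * hC + 2 * (-4 : ZMod p) ^ i * (p / 2).choose i * hhalf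

theorem sum_range_prime_natCast_centralBinom :
    ∑ i ∈ range p, (i.centralBinom : ZMod p) = (-3) ^ (p / 2) := by
  have hsub : range (p / 2 + 1) ⊆ range p :=
    range_subset_range.mpr (by have := (Fact.out : p.Prime).two_le; omega)
  rw [← sum_subset hsub fun i hi hi' => natCast_centralBinom_eq_zero_of_le_two_mul_mod (by
      simp only [mem_range, not_lt] at hi hi'; rw [Nat.mod_eq_of_lt hi]; omega),
    sum_congr rfl fun i hi => natCast_centralBinom_eq_neg_four_pow_mul_choose hp2
      (Nat.lt_succ_iff.mp (mem_range.mp hi)),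
    show (-3 : ZMod p) = -4 + 1 by norm_num, add_pow]
  simp only [one_pow, mul_one]

end ZMod

theorem legendreSym.at_neg_three {p : ℕ} [Fact p.Prime] (hp : p ≠ 2) :
    legendreSym p (-3) = legendreSym 3 p := by
  have hp_odd : p % 2 = 1 := Nat.odd_iff.mp ((Fact.out : p.Prime).odd_of_ne_two hp)
  rw [legendreSym.at_neg hp, legendreSym.quadratic_reciprocity' hp (by decide : 3 ≠ 2),
    ZMod.χ₄_eq_neg_one_pow hp_odd]
  norm_num

theorem catalan_partial_sum_mod_p_general
    (p : ℕ) (hp : p.Prime) (hodd : Odd p) (r : ℕ) (q : ℕ) (hq : q = p ^ r) :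
    ((2 * ∑ k ∈ Finset.range q, catalan k : ℕ) : ZMod p) =
      ((3 * legendreSym 3 (q : ℤ) - 1 : ℤ) : ZMod p) := by
  have := Fact.mk hp
  have hp2 : p ≠ 2 := by rintro rfl; exact absurd hodd (by decide)
  subst hq
  have hsum : ∑ k ∈ range (p ^ r), (k.centralBinom : ZMod p) = legendreSym 3 ((p : ℤ) ^ r) := by
    rw [ZMod.sum_range_pow_natCast_centralBinom, ZMod.sum_range_prime_natCast_centralBinom hp2,
      ← legendreSym.hom_apply, map_pow, legendreSym.hom_apply, ← legendreSym.at_neg_three hp2,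
      Int.cast_pow, legendreSym.eq_pow]
    norm_num
  have htel := congrArg (Nat.cast : ℕ → ZMod p) (two_mul_sum_range_catalan_add_centralBinom (p ^ r))
  push_cast at htel ⊢
  rw [ZMod.natCast_centralBinom_prime_pow, hsum] at htel
  linear_combination htel

theorem catalan_partial_sum_mod_p
    (p : ℕ) (hp : p.Prime) (hodd : Odd p) (r : ℕ) (hr : 1 ≤ r) (q : ℕ) (hq : q = p ^ r) :
    ((2 * ∑ k ∈ Finset.range q, catalan k : ℕ) : ZMod p) =
      ((3 * legendreSym 3 (q : ℤ) - 1 : ℤ) : ZMod p) :=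
  catalan_partial_sum_mod_p_general p hp hodd r q hq
end

section
/- Let p be a prime with p > 3 and let q = p^r be a power of p (r ≥ 1). Then 3·∑_{k=0}^{q-1} k·C(2k,k) ≡ −2·(q/3) (mod p), where (q/3) denotes the Legendre symbol of q modulo 3; i.e., in ℤ/pℤ, three times the image of ∑_{k=0}^{q-1} k·C(2k,k) equals the image of the integer −2·(q/3). (Equivalently, ∑_{k=0}^{q-1} k·C(2k,k) ≡ −(2/3)·(q/3) (mod p).) -/
/-! The identity `(3k + 2)·C(2k,k) = (k + 1)·C(2k+2,k+1) - k·C(2k,k)` telescopes to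
`3·∑_{k<q} k·C(2k,k) + 2·∑_{k<q} C(2k,k) = q·C(2q,q) ≡ 0 (mod p)`, so it suffices to compute
`∑_{k<q} C(2k,k)` modulo `p`. By Lucas' theorem `C(2k,k)` is multiplicative in the base-`p` digits
of `k`, so this sum is the `r`-th power of `∑_{k<p} C(2k,k)`. As `C(2k,k) = (-4)^k·C(-1/2,k)` and
`-1/2 ≡ (p-1)/2 (mod p)`, that sum is `(1 - 4)^((p-1)/2) ≡ (-3/p) = (p/3)` by quadratic reciprocity. -/

open Finset

namespace Nat

theorem sum_range_three_mul_add_two_mul_centralBinom (n : ℕ) :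
    ∑ k ∈ range n, (3 * k + 2) * centralBinom k = n * centralBinom n := by
  induction n with
  | zero => simp
  | succ n ih =>
    rw [sum_range_succ, ih, succ_mul_centralBinom_succ]
    ring

theorem cast_choose_succ_mul {R : Type*} [CommRing R] (n k : ℕ) :
    (n.choose (k + 1) : R) * (k + 1) = n.choose k * (n - k) := by
  rcases le_or_gt k n with hkn | hnk
  · have h := congrArg (Nat.cast : ℕ → R) (choose_succ_right_eq n k)
    push_cast [hkn] at h
    exact h
  · simp [choose_eq_zero_of_lt hnk, choose_eq_zero_of_lt (lt_succ_of_lt hnk)]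

end Nat

theorem Finset.sum_range_mul_eq_sum_sum {M : Type*} [AddCommMonoid M] (f : ℕ → M) (a m : ℕ) :
    ∑ k ∈ range (a * m), f k = ∑ b ∈ range m, ∑ i ∈ range a, f (i + a * b) := by
  induction m with
  | zero => simp
  | succ m ih =>
    rw [Nat.mul_succ, sum_range_add, ih, sum_range_succ]
    simp only [add_comm]

open Nat

namespace ZMod

theorem two_mul_cast_div_two {n : ℕ} (hn : Odd n) : 2 * ((n / 2 : ℕ) : ZMod n) = -1 := by
  have := congrArg (Nat.cast : ℕ → ZMod n) (Nat.two_mul_div_two_add_one_of_odd hn)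
  push_cast [ZMod.natCast_self] at this
  linear_combination this

variable {p : ℕ} [Fact p.Prime]

theorem cast_centralBinom_eq_neg_four_pow_mul_choose (hp2 : p ≠ 2) {k : ℕ} (hk : k < p) :
    (centralBinom k : ZMod p) = (-4) ^ k * (p / 2).choose k := by
  have hodd : Odd p := (Fact.out : p.Prime).odd_of_ne_two hp2
  induction k with
  | zero => simp
  | succ k ih =>
    have hk0 : ((k : ZMod p) + 1) ≠ 0 := by
      exact_mod_cast (mt (natCast_eq_zero_iff (k + 1) p).mp)
        (Nat.not_dvd_of_pos_of_lt k.succ_pos hk)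
    refine mul_left_cancel₀ hk0 ?_
    have hrec := congrArg (Nat.cast : ℕ → ZMod p) (succ_mul_centralBinom_succ k)
    push_cast at hrec
    rw [hrec, ih (by omega)]
    linear_combination -(-4 : ZMod p) ^ (k + 1) * Nat.cast_choose_succ_mul (R := ZMod p) (p / 2) k
      + 2 * (-4) ^ k * ((p / 2).choose k : ZMod p) * two_mul_cast_div_two hodd

theorem sum_range_cast_centralBinom_prime (hp2 : p ≠ 2) :
    ∑ k ∈ range p, (centralBinom k : ZMod p) = (-3) ^ (p / 2) := by
  have hhalf : p / 2 + 1 ≤ p := Nat.div_lt_self (Fact.out : p.Prime).pos one_lt_two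
  rw [sum_congr rfl fun k hk ↦ cast_centralBinom_eq_neg_four_pow_mul_choose hp2 (mem_range.mp hk),
    ← sum_subset (range_subset_range.mpr hhalf) fun k _ hk ↦ by
      rw [choose_eq_zero_of_lt (by simpa using hk), Nat.cast_zero, mul_zero],
    show (-3 : ZMod p) = -4 + 1 by norm_num, add_pow]
  simp only [one_pow, mul_one]

theorem cast_choose_add_prime_mul {a i : ℕ} (ha : a < p) (hi : i < p) (b j : ℕ) :
    ((a + p * b).choose (i + p * j) : ZMod p) = a.choose i * b.choose j := by
  have hp := (Fact.out : p.Prime).pos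
  have lucas := (ZMod.natCast_eq_natCast_iff _ _ _).mpr
    (Choose.choose_modEq_choose_mod_mul_choose_div_nat (n := a + p * b) (k := i + p * j) (p := p))
  rw [add_mul_mod_self_left, add_mul_mod_self_left, mod_eq_of_lt ha, mod_eq_of_lt hi,
    add_mul_div_left _ _ hp, add_mul_div_left _ _ hp, div_eq_of_lt ha, div_eq_of_lt hi,
    zero_add, zero_add] at lucas
  exact_mod_cast lucas

theorem cast_centralBinom_add_prime_mul {i : ℕ} (hi : i < p) (b : ℕ) :
    (centralBinom (i + p * b) : ZMod p) = centralBinom i * centralBinom b := by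
  simp only [centralBinom_eq_two_mul_choose]
  rcases lt_or_ge (2 * i) p with h2i | h2i
  · rw [show 2 * (i + p * b) = 2 * i + p * (2 * b) by ring,
      cast_choose_add_prime_mul h2i hi]
  · -- the last base-`p` digit of `2 * i` is `2 * i - p < i`, so both sides vanish
    have hlt : 2 * i - p < p := by omega
    have hzero : ((2 * i - p).choose i : ZMod p) = 0 := by
      rw [choose_eq_zero_of_lt (by omega), Nat.cast_zero]
    have hcentral := cast_choose_add_prime_mul hlt hi 1 0
    rw [mul_one, mul_zero, add_zero, Nat.sub_add_cancel h2i, hzero, zero_mul] at hcentral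
    rw [show 2 * (i + p * b) = (2 * i - p) + p * (2 * b + 1) by zify [h2i]; ring,
      cast_choose_add_prime_mul hlt hi, hzero, zero_mul, hcentral, zero_mul]

theorem sum_range_cast_centralBinom_prime_pow (r : ℕ) :
    ∑ k ∈ range (p ^ r), (centralBinom k : ZMod p)
      = (∑ k ∈ range p, (centralBinom k : ZMod p)) ^ r := by
  induction r with
  | zero => simp
  | succ r ih =>
    rw [pow_succ', sum_range_mul_eq_sum_sum, pow_succ, ← ih, sum_mul_sum]
    refine sum_congr rfl fun b _ ↦ sum_congr rfl fun i hi ↦ ?_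
    rw [cast_centralBinom_add_prime_mul (mem_range.mp hi), mul_comm]

theorem _root_.legendreSym_three_eq_legendreSym_neg_three (hp2 : p ≠ 2) :
    legendreSym 3 p = legendreSym p (-3) := by
  have hodd : p % 2 = 1 := Nat.odd_iff.mp ((Fact.out : p.Prime).odd_of_ne_two hp2)
  rw [legendreSym.quadratic_reciprocity' hp2 (by norm_num), legendreSym.at_neg hp2,
    χ₄_eq_neg_one_pow hodd]
  norm_num

theorem intCast_legendreSym_three (hp2 : p ≠ 2) :
    ((legendreSym 3 p : ℤ) : ZMod p) = (-3) ^ (p / 2) := by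
  rw [legendreSym_three_eq_legendreSym_neg_three hp2, legendreSym.eq_pow]
  norm_num

end ZMod

theorem weighted_central_binomial_partial_sum_mod_p
    (p : ℕ) (hp : p.Prime) (hp3 : 3 < p) (r : ℕ) (hr : 1 ≤ r) (q : ℕ) (hq : q = p ^ r) :
    ((3 * ∑ k ∈ Finset.range q, k * (2 * k).choose k : ℕ) : ZMod p) =
      ((-2 * legendreSym 3 (q : ℤ) : ℤ) : ZMod p) := by
  have := Fact.mk hp
  have hp2 : p ≠ 2 := by omega
  subst hq
  have hpr : (p : ZMod p) ^ r = 0 := by rw [ZMod.natCast_self, zero_pow (by omega)]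
  have htelescope := congrArg (Nat.cast : ℕ → ZMod p)
    (sum_range_three_mul_add_two_mul_centralBinom (p ^ r))
  have hsum : ∑ k ∈ range (p ^ r), (centralBinom k : ZMod p) = ((-3) ^ (p / 2)) ^ r := by
    rw [ZMod.sum_range_cast_centralBinom_prime_pow, ZMod.sum_range_cast_centralBinom_prime hp2]
  have hlegendre : ((legendreSym 3 ((p : ℤ) ^ r) : ℤ) : ZMod p) = ((-3) ^ (p / 2)) ^ r := by
    rw [← legendreSym.hom_apply, map_pow, legendreSym.hom_apply, Int.cast_pow,
      ZMod.intCast_legendreSym_three hp2]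
  simp only [← centralBinom_eq_two_mul_choose]
  push_cast [hpr, add_mul, sum_add_distrib, mul_assoc, ← mul_sum] at htelescope ⊢
  rw [hlegendre]
  linear_combination htelescope - 2 * hsum
end
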